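/- arXiv:2502.09862 — 6 statements merged into one kernel-verified Lean document; each statement's English description precedes it below -/
import Mathlib

section
/- Let H be a complex Hilbert space, f : ℕ → H a frame for H with frame operator S, h : ℕ → H a Bessel sequence with ∑_{i∈ℕ} ⟨x, f i⟩ · h i = 0 for all x ∈ H, and g i = S⁻¹(f i) + h i the corresponding dual frame. Let Λ ⊆ ℕ be a finite set. Then {g i : i ∉ Λ} is a frame for H if and only if the continuous linear operator V : H → H defined by V x = S⁻¹ x − S⁻¹( ∑_{i∈Λ} ⟨S⁻¹ x, f i⟩ · f i ) − ∑_{i∈Λ} ⟨S⁻¹ x, f i⟩ · h i − S⁻¹( ∑_{i∈Λ} ⟨x, h i⟩ · f i ) + ∑_{i∉Λ} ⟨x, h i⟩ · h i is bijective. -/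
open scoped ComplexInnerProductSpace

section helpers

lemma cs_finset {ι} (s : Finset ι) (a b : ι → ℝ) (ha : ∀ i, 0 ≤ a i) (hb : ∀ i, 0 ≤ b i) :
    ∑ i ∈ s, a i * b i ≤ Real.sqrt (∑ i ∈ s, a i ^ 2) * Real.sqrt (∑ i ∈ s, b i ^ 2) := by
  have h := Finset.sum_mul_sq_le_sq_mul_sq s a b
  have hnn : 0 ≤ ∑ i ∈ s, a i * b i := Finset.sum_nonneg fun i _ => mul_nonneg (ha i) (hb i)
  have := Real.sqrt_le_sqrt h
  rwa [Real.sqrt_sq hnn, Real.sqrt_mul (Finset.sum_nonneg fun i _ => sq_nonneg (a i))] at this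

lemma cs_tsum {ι} (a b : ι → ℝ) (ha : ∀ i, 0 ≤ a i) (hb : ∀ i, 0 ≤ b i)
    (ha2 : Summable fun i => a i ^ 2) (hb2 : Summable fun i => b i ^ 2) :
    Summable (fun i => a i * b i) ∧
      ∑' i, a i * b i ≤ Real.sqrt (∑' i, a i ^ 2) * Real.sqrt (∑' i, b i ^ 2) := by
  have hsum : Summable (fun i => a i * b i) := by
    apply Summable.of_nonneg_of_le (fun i => mul_nonneg (ha i) (hb i))
      (fun i => ?_) (((ha2.add hb2).div_const 2))
    have h2 := two_mul_le_add_sq (a i) (b i)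
    show a i * b i ≤ (a i ^ 2 + b i ^ 2) / 2
    nlinarith
  refine ⟨hsum, Summable.tsum_le_of_sum_le hsum fun s => ?_⟩
  calc ∑ i ∈ s, a i * b i ≤ Real.sqrt (∑ i ∈ s, a i ^ 2) * Real.sqrt (∑ i ∈ s, b i ^ 2) :=
        cs_finset s a b ha hb
    _ ≤ Real.sqrt (∑' i, a i ^ 2) * Real.sqrt (∑' i, b i ^ 2) := by
        gcongr <;> exact Summable.sum_le_tsum s (fun i _ => sq_nonneg _) ‹_›

variable {H : Type*} [NormedAddCommGroup H] [InnerProductSpace ℂ H] [CompleteSpace H]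

omit [CompleteSpace H] in
lemma synthesis_finset {ι} (f : ι → H) (B : ℝ) (hB : 0 ≤ B)
    (hf : ∀ x : H, Summable (fun i => ‖⟪f i, x⟫‖ ^ 2) ∧ ∑' i, ‖⟪f i, x⟫‖ ^ 2 ≤ B * ‖x‖ ^ 2)
    (c : ι → ℂ) (t : Finset ι) :
    ‖∑ i ∈ t, c i • f i‖ ^ 2 ≤ B * ∑ i ∈ t, ‖c i‖ ^ 2 := by
  set z := ∑ i ∈ t, c i • f i with hz
  have h1 : (⟪z, z⟫ : ℂ) = ∑ i ∈ t, (starRingEnd ℂ) (c i) * ⟪f i, z⟫ := by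
    rw [hz, sum_inner]
    exact Finset.sum_congr rfl fun i _ => inner_smul_left _ _ _
  have h2 : ‖z‖ ^ 2 ≤ ∑ i ∈ t, ‖c i‖ * ‖⟪f i, z⟫‖ := by
    calc ‖z‖ ^ 2 = ‖(⟪z, z⟫ : ℂ)‖ := by
          rw [inner_self_eq_norm_sq_to_K]; push_cast [norm_pow]; simp [sq_abs]
      _ ≤ ∑ i ∈ t, ‖(starRingEnd ℂ) (c i) * ⟪f i, z⟫‖ := by rw [h1]; exact norm_sum_le _ _
      _ = ∑ i ∈ t, ‖c i‖ * ‖⟪f i, z⟫‖ := by simp [norm_mul]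
  have h3 : ∑ i ∈ t, ‖c i‖ * ‖⟪f i, z⟫‖ ≤
      Real.sqrt (∑ i ∈ t, ‖c i‖ ^ 2) * Real.sqrt (∑ i ∈ t, ‖⟪f i, z⟫‖ ^ 2) :=
    cs_finset t _ _ (fun i => norm_nonneg _) (fun i => norm_nonneg _)
  have h4 : ∑ i ∈ t, ‖⟪f i, z⟫‖ ^ 2 ≤ B * ‖z‖ ^ 2 :=
    le_trans (Summable.sum_le_tsum t (fun i _ => sq_nonneg _) (hf z).1) (hf z).2
  have h5 : ‖z‖ ^ 2 ≤ Real.sqrt (∑ i ∈ t, ‖c i‖ ^ 2) * (Real.sqrt B * ‖z‖) := by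
    calc ‖z‖ ^ 2 ≤ _ := le_trans h2 h3
      _ ≤ Real.sqrt (∑ i ∈ t, ‖c i‖ ^ 2) * (Real.sqrt B * ‖z‖) := by
          refine mul_le_mul_of_nonneg_left ?_ (Real.sqrt_nonneg _)
          calc Real.sqrt (∑ i ∈ t, ‖⟪f i, z⟫‖ ^ 2) ≤ Real.sqrt (B * ‖z‖ ^ 2) :=
              Real.sqrt_le_sqrt h4
            _ = Real.sqrt B * ‖z‖ := by
              rw [Real.sqrt_mul hB, Real.sqrt_sq (norm_nonneg _)]
  rcases eq_or_ne z 0 with hz0 | hz0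
  · have : (0:ℝ) ≤ B * ∑ i ∈ t, ‖c i‖ ^ 2 := by positivity
    simpa [hz0]
  · have hzpos : 0 < ‖z‖ := norm_pos_iff.mpr hz0
    have h6 : ‖z‖ ≤ Real.sqrt (∑ i ∈ t, ‖c i‖ ^ 2) * Real.sqrt B := by
      rw [pow_two] at h5
      nlinarith [Real.sqrt_nonneg (∑ i ∈ t, ‖c i‖ ^ 2), Real.sqrt_nonneg B]
    calc ‖z‖ ^ 2 ≤ (Real.sqrt (∑ i ∈ t, ‖c i‖ ^ 2) * Real.sqrt B) ^ 2 := by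
          apply pow_le_pow_left₀ (norm_nonneg _) h6
      _ = B * ∑ i ∈ t, ‖c i‖ ^ 2 := by
          rw [mul_pow, Real.sq_sqrt hB, Real.sq_sqrt (Finset.sum_nonneg fun i _ => sq_nonneg _)]
          ring

lemma synthesis_summable {ι} (f : ι → H) (B : ℝ) (hB : 0 ≤ B)
    (hf : ∀ x : H, Summable (fun i => ‖⟪f i, x⟫‖ ^ 2) ∧ ∑' i, ‖⟪f i, x⟫‖ ^ 2 ≤ B * ‖x‖ ^ 2)
    (c : ι → ℂ) (hc : Summable fun i => ‖c i‖ ^ 2) :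
    Summable (fun i => c i • f i) := by
  rw [summable_iff_vanishing]
  intro e he
  rcases Metric.mem_nhds_iff.mp he with ⟨ε, hε, hball⟩
  have : ∃ s : Finset ι, ∀ t : Finset ι, Disjoint t s →
      ∑ i ∈ t, ‖c i‖ ^ 2 ∈ Metric.ball (0:ℝ) (ε ^ 2 / (B + 1)) := by
    refine (summable_iff_vanishing.mp hc) _ (Metric.ball_mem_nhds _ ?_)
    positivity
  rcases this with ⟨s, hs⟩
  refine ⟨s, fun t ht => ?_⟩
  apply hball
  rw [Metric.mem_ball, dist_zero_right]
  have h1 := synthesis_finset f B hB hf c t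
  have h2 := hs t ht
  rw [Metric.mem_ball, dist_zero_right, Real.norm_eq_abs,
    abs_of_nonneg (Finset.sum_nonneg fun i _ => sq_nonneg _)] at h2
  have hBp : (0:ℝ) < B + 1 := by linarith
  have : ‖∑ i ∈ t, c i • f i‖ ^ 2 < ε ^ 2 := by
    calc ‖∑ i ∈ t, c i • f i‖ ^ 2 ≤ B * ∑ i ∈ t, ‖c i‖ ^ 2 := h1
      _ ≤ (B + 1) * ∑ i ∈ t, ‖c i‖ ^ 2 := by
          have := Finset.sum_nonneg (s := t) fun i _ => sq_nonneg ‖c i‖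
          nlinarith
      _ < (B + 1) * (ε ^ 2 / (B + 1)) := by
          apply mul_lt_mul_of_pos_left h2 hBp
      _ = ε ^ 2 := by field_simp
  nlinarith [norm_nonneg (∑ i ∈ t, c i • f i)]

end helpers

variable {H : Type*} [NormedAddCommGroup H] [InnerProductSpace ℂ H] [CompleteSpace H]

/-- The subfamily `{f i : i ∉ Λ}` is a frame for `H`: there are constants `0 < A, B` with
`A‖x‖² ≤ ∑_{i∉Λ} |⟨x, f i⟩|² ≤ B‖x‖²` for all `x`.  (The inner product `⟨x, y⟩` of the paper,
linear in the first argument, is `⟪y, x⟫` in Mathlib's convention.) -/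
def IsFrameOn (f : ℕ → H) (Λ : Set ℕ) : Prop :=
  ∃ A B : ℝ, 0 < A ∧ 0 < B ∧ ∀ x : H,
    A * ‖x‖ ^ 2 ≤ ∑' i : {i : ℕ // i ∉ Λ}, ‖⟪f i, x⟫‖ ^ 2 ∧
      ∑' i : {i : ℕ // i ∉ Λ}, ‖⟪f i, x⟫‖ ^ 2 ≤ B * ‖x‖ ^ 2

/-- `f` is a frame for `H`. -/
def IsFrame (f : ℕ → H) : Prop := IsFrameOn f (∅ : Set ℕ)

/-- `h` is a Bessel sequence: `∑_{i} |⟨x, h i⟩|² ≤ B‖x‖²` for all `x`, for some `B > 0`. -/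
def IsBessel (h : ℕ → H) : Prop :=
  ∃ B : ℝ, 0 < B ∧ ∀ x : H,
    Summable (fun i : ℕ => ‖⟪h i, x⟫‖ ^ 2) ∧ ∑' i : ℕ, ‖⟪h i, x⟫‖ ^ 2 ≤ B * ‖x‖ ^ 2

theorem dual_subfamily_frame_iff_operator_bijective
    (f : ℕ → H) (hf : IsFrame f)
    (S : H ≃L[ℂ] H) (hS : ∀ x : H, S x = ∑' i : ℕ, ⟪f i, x⟫ • f i)
    (h : ℕ → H) (hbessel : IsBessel h)
    (hdual : ∀ x : H, HasSum (fun i : ℕ => ⟪f i, x⟫ • h i) 0)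
    (g : ℕ → H) (hg : ∀ i, g i = S.symm (f i) + h i)
    (Λ : Set ℕ) (hΛ : Λ.Finite)
    (V : H →L[ℂ] H)
    (hV : ∀ x : H, V x = S.symm x
        - S.symm (∑' i : ↥Λ, ⟪f i, S.symm x⟫ • f i)
        - ∑' i : ↥Λ, ⟪f i, S.symm x⟫ • h i
        - S.symm (∑' i : ↥Λ, ⟪h i, x⟫ • f i)
        + ∑' i : {i : ℕ // i ∉ Λ}, ⟪h i, x⟫ • h i) :
    IsFrameOn g Λ ↔ Function.Bijective V := by
  classical
  obtain ⟨Af, Bf, hAf, hBf, hfb⟩ := hf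
  obtain ⟨Bh, hBh, hhb⟩ := hbessel
  haveI : Fintype ↥Λ := hΛ.fintype
  set e : {i : ℕ // i ∉ (∅ : Set ℕ)} ≃ ℕ := Equiv.subtypeUnivEquiv (fun i => Set.notMem_empty i)
  -- Bessel property of f over ℕ
  have hfB : ∀ x : H, Summable (fun i : ℕ => ‖⟪f i, x⟫‖ ^ 2) ∧
      ∑' i : ℕ, ‖⟪f i, x⟫‖ ^ 2 ≤ Bf * ‖x‖ ^ 2 := by
    intro x
    have hts : ∑' i : {i : ℕ // i ∉ (∅ : Set ℕ)}, ‖⟪f i, x⟫‖ ^ 2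
        = ∑' i : ℕ, ‖⟪f i, x⟫‖ ^ 2 := e.tsum_eq (fun i => ‖⟪f i, x⟫‖ ^ 2)
    have hsum : Summable (fun i : ℕ => ‖⟪f i, x⟫‖ ^ 2) := by
      rcases eq_or_ne x 0 with hx | hx
      · subst hx; simpa using summable_zero
      · by_contra hns
        have hns' : ¬ Summable (fun i : {i : ℕ // i ∉ (∅ : Set ℕ)} => ‖⟪f i, x⟫‖ ^ 2) := by
          intro hcon
          exact hns (e.summable_iff.mp hcon)
        have h0 := tsum_eq_zero_of_not_summable hns'
        have h1 := (hfb x).1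
        rw [h0] at h1
        have hsq : ‖x‖ ^ 2 = 0 := le_antisymm (by nlinarith) (sq_nonneg _)
        exact hx (norm_eq_zero.mp ((pow_eq_zero_iff two_ne_zero).mp hsq))
    exact ⟨hsum, by rw [← hts]; exact (hfb x).2⟩
  -- basic HasSum for S
  have hSsum : ∀ x : H, HasSum (fun i : ℕ => ⟪f i, x⟫ • f i) (S x) := by
    intro x
    have hsumm := synthesis_summable f Bf hBf.le hfB (fun i => ⟪f i, x⟫) (hfB x).1
    have := hsumm.hasSum
    rwa [← hS x] at this
  -- S is self-adjoint
  have Ssa : ∀ x y : H, (⟪S x, y⟫ : ℂ) = ⟪x, S y⟫ := by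
    intro x y
    have h1 : HasSum (fun i : ℕ => ⟪f i, x⟫ * ⟪y, f i⟫) ⟪y, S x⟫ := by
      have := (hSsum x).mapL (innerSL ℂ y)
      simpa [inner_smul_right, mul_comm] using this
    have h2 : HasSum (fun i : ℕ => ⟪f i, y⟫ * ⟪x, f i⟫) ⟪x, S y⟫ := by
      have := (hSsum y).mapL (innerSL ℂ x)
      simpa [inner_smul_right, mul_comm] using this
    have h3 : HasSum (fun i : ℕ => (starRingEnd ℂ) (⟪f i, x⟫ * ⟪y, f i⟫))
        ((starRingEnd ℂ) ⟪y, S x⟫) := h1.star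
    have h4 : HasSum (fun i : ℕ => ⟪f i, y⟫ * ⟪x, f i⟫) ((starRingEnd ℂ) ⟪y, S x⟫) := by
      simpa [map_mul, inner_conj_symm, mul_comm] using h3
    have h5 := h2.unique h4
    rw [h5, inner_conj_symm]
  -- S.symm is self-adjoint
  have Sinvsa : ∀ x y : H, (⟪S.symm x, y⟫ : ℂ) = ⟪x, S.symm y⟫ := by
    intro x y
    have := Ssa (S.symm x) (S.symm y)
    simp only [S.apply_symm_apply] at this
    exact this.symm
  set Cs : ℝ := ‖(S.symm : H →L[ℂ] H)‖ with hCsdef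
  have hCs : ∀ x : H, ‖S.symm x‖ ≤ Cs * ‖x‖ := fun x => (S.symm : H →L[ℂ] H).le_opNorm x
  have hCsnn : 0 ≤ Cs := norm_nonneg _
  set Bg : ℝ := 2 * (Bf * Cs ^ 2 + Bh) with hBgdef
  have hBgpos : 0 < Bg := by nlinarith [sq_nonneg Cs]
  have hginner : ∀ (i : ℕ) (x : H), (⟪g i, x⟫ : ℂ) = ⟪f i, S.symm x⟫ + ⟪h i, x⟫ := by
    intro i x; rw [hg i, inner_add_left, Sinvsa]
  -- g is Bessel with bound Bg
  have hgB : ∀ x : H, Summable (fun i : ℕ => ‖⟪g i, x⟫‖ ^ 2) ∧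
      ∑' i : ℕ, ‖⟪g i, x⟫‖ ^ 2 ≤ Bg * ‖x‖ ^ 2 := by
    intro x
    have hfs : Summable (fun i : ℕ => ‖⟪f i, S.symm x⟫‖ ^ 2) := (hfB (S.symm x)).1
    have hhs := (hhb x).1
    have hb : ∀ i : ℕ, ‖⟪g i, x⟫‖ ^ 2 ≤ 2 * (‖⟪f i, S.symm x⟫‖ ^ 2 + ‖⟪h i, x⟫‖ ^ 2) := by
      intro i
      rw [hginner]
      have h1 : ‖⟪f i, S.symm x⟫ + ⟪h i, x⟫‖ ≤ ‖⟪f i, S.symm x⟫‖ + ‖⟪h i, x⟫‖ := norm_add_le _ _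
      nlinarith [norm_nonneg ((⟪f i, S.symm x⟫ : ℂ) + ⟪h i, x⟫), norm_nonneg (⟪f i, S.symm x⟫ : ℂ),
        norm_nonneg (⟪h i, x⟫ : ℂ), two_mul_le_add_sq ‖(⟪f i, S.symm x⟫ : ℂ)‖ ‖(⟪h i, x⟫ : ℂ)‖]
    have hsum : Summable (fun i : ℕ => ‖⟪g i, x⟫‖ ^ 2) :=
      Summable.of_nonneg_of_le (fun i => sq_nonneg _) hb ((hfs.add hhs).mul_left 2)
    refine ⟨hsum, ?_⟩
    calc ∑' i : ℕ, ‖⟪g i, x⟫‖ ^ 2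
        ≤ ∑' i : ℕ, 2 * (‖⟪f i, S.symm x⟫‖ ^ 2 + ‖⟪h i, x⟫‖ ^ 2) :=
          Summable.tsum_le_tsum hb hsum ((hfs.add hhs).mul_left 2)
      _ = 2 * ((∑' i : ℕ, ‖⟪f i, S.symm x⟫‖ ^ 2) + ∑' i : ℕ, ‖⟪h i, x⟫‖ ^ 2) := by
          rw [tsum_mul_left, Summable.tsum_add hfs hhs]
      _ ≤ Bg * ‖x‖ ^ 2 := by
          have h1 := (hfB (S.symm x)).2
          have h2 := (hhb x).2
          have h3 : ‖S.symm x‖ ^ 2 ≤ (Cs * ‖x‖) ^ 2 :=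
            pow_le_pow_left₀ (norm_nonneg _) (hCs x) 2
          rw [hBgdef]
          nlinarith [hBf.le]
  -- the "adjoint" sum vanishes
  have hadjsum : ∀ x : H, Summable (fun i : ℕ => (⟪h i, x⟫ : ℂ) • f i) := fun x =>
    synthesis_summable f Bf hBf.le hfB _ (hhb x).1
  have hadj : ∀ x : H, HasSum (fun i : ℕ => (⟪h i, x⟫ : ℂ) • f i) 0 := by
    intro x
    have hw := (hadjsum x).hasSum
    suffices hz : (∑' i : ℕ, (⟪h i, x⟫ : ℂ) • f i) = 0 by rwa [hz] at hw
    refine ext_inner_left ℂ fun v => ?_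
    rw [inner_zero_right]
    have h1 : HasSum (fun i : ℕ => (⟪h i, x⟫ : ℂ) * ⟪v, f i⟫)
        ⟪v, ∑' i : ℕ, (⟪h i, x⟫ : ℂ) • f i⟫ := by
      simpa [inner_smul_right] using hw.mapL (innerSL ℂ v)
    have h2 : HasSum (fun i : ℕ => (⟪f i, v⟫ : ℂ) * ⟪x, h i⟫) 0 := by
      simpa [inner_smul_right] using (hdual v).mapL (innerSL ℂ x)
    have h3 : HasSum (fun i : ℕ => (⟪h i, x⟫ : ℂ) * ⟪v, f i⟫) 0 := by
      have := h2.star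
      simpa [map_mul, inner_conj_symm, mul_comm] using this
    exact h1.unique h3
  have hPsum : ∀ x : H, Summable (fun i : ℕ => (⟪h i, x⟫ : ℂ) • h i) := fun x =>
    synthesis_summable h Bh hBh.le hhb _ (hhb x).1
  -- total sum of the frame-operator-type series for g
  have hu : ∀ x : H,
      HasSum (fun i : ℕ => (⟪g i, x⟫ : ℂ) • g i)
        (S.symm x + ∑' i : ℕ, (⟪h i, x⟫ : ℂ) • h i) := by
    intro x
    have T1 : HasSum (fun i : ℕ => (⟪f i, S.symm x⟫ : ℂ) • S.symm (f i)) (S.symm x) := by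
      have := (hSsum (S.symm x)).mapL (S.symm : H →L[ℂ] H)
      simpa using this
    have T2 := hdual (S.symm x)
    have T3 : HasSum (fun i : ℕ => (⟪h i, x⟫ : ℂ) • S.symm (f i)) 0 := by
      have := (hadj x).mapL (S.symm : H →L[ℂ] H)
      simpa using this
    have T4 := (hPsum x).hasSum
    have hcomb := ((T1.add T2).add T3).add T4
    simp only [add_zero] at hcomb
    have heq : (fun i : ℕ =>
        (⟪f i, S.symm x⟫ : ℂ) • S.symm (f i) + (⟪f i, S.symm x⟫ : ℂ) • h i
          + (⟪h i, x⟫ : ℂ) • S.symm (f i) + (⟪h i, x⟫ : ℂ) • h i)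
        = fun i : ℕ => (⟪g i, x⟫ : ℂ) • g i := by
      funext i
      rw [hginner i x, hg i]
      module
    rwa [heq] at hcomb
  -- V is the frame operator of the subfamily
  have hgVsum : ∀ x : H, HasSum (fun i : {i : ℕ // i ∉ Λ} => (⟪g i, x⟫ : ℂ) • g i) (V x) := by
    intro x
    have htot := hu x
    have hsub : Summable (fun i : {i : ℕ // i ∉ Λ} => (⟪g i, x⟫ : ℂ) • g i) :=
      htot.summable.subtype Λᶜ
    have hsplit := Summable.tsum_subtype_add_tsum_subtype_compl htot.summable Λ
    have hval : (∑' i : {i : ℕ // i ∉ Λ}, (⟪g i, x⟫ : ℂ) • g i)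
        = (S.symm x + ∑' i : ℕ, (⟪h i, x⟫ : ℂ) • h i) - ∑' i : ↥Λ, (⟪g i, x⟫ : ℂ) • g i := by
      rw [← htot.tsum_eq, ← hsplit]
      abel
    have hfin := hsub.hasSum
    rw [hval] at hfin
    have hVx : V x = (S.symm x + ∑' i : ℕ, (⟪h i, x⟫ : ℂ) • h i)
        - ∑' i : ↥Λ, (⟪g i, x⟫ : ℂ) • g i := by
      rw [hV x]
      have hhsplit : (∑' i : {i : ℕ // i ∉ Λ}, (⟪h i, x⟫ : ℂ) • h i)
          = (∑' i : ℕ, (⟪h i, x⟫ : ℂ) • h i) - ∑' i : ↥Λ, (⟪h i, x⟫ : ℂ) • h i := by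
        exact eq_sub_of_add_eq' (Summable.tsum_subtype_add_tsum_subtype_compl (hPsum x) Λ)
      have hΛsum : (∑' i : ↥Λ, (⟪g i, x⟫ : ℂ) • g i)
          = S.symm (∑' i : ↥Λ, (⟪f i, S.symm x⟫ : ℂ) • f i)
            + (∑' i : ↥Λ, (⟪f i, S.symm x⟫ : ℂ) • h i)
            + S.symm (∑' i : ↥Λ, (⟪h i, x⟫ : ℂ) • f i)
            + ∑' i : ↥Λ, (⟪h i, x⟫ : ℂ) • h i := by
        simp only [tsum_fintype, map_sum, ← Finset.sum_add_distrib]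
        refine Finset.sum_congr rfl fun i _ => ?_
        rw [hginner i x, hg i, map_smul, map_smul]
        module
      rw [hhsplit, hΛsum]
      abel
    rwa [← hVx] at hfin
  -- summability of the subfamily coefficients
  have hrsum : ∀ x : H, Summable (fun i : {i : ℕ // i ∉ Λ} => ‖⟪g i, x⟫‖ ^ 2) := fun x =>
    (hgB x).1.subtype Λᶜ
  have hrle : ∀ x : H, (∑' i : {i : ℕ // i ∉ Λ}, ‖⟪g i, x⟫‖ ^ 2) ≤ Bg * ‖x‖ ^ 2 := by
    intro x
    have hsplit := Summable.tsum_subtype_add_tsum_subtype_compl (hgB x).1 Λ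
    have hΛnn : (0:ℝ) ≤ ∑' i : ↥Λ, ‖⟪g i, x⟫‖ ^ 2 := tsum_nonneg fun i => sq_nonneg _
    have h2 := (hgB x).2
    have : (∑' i : ↥Λ, ‖⟪g (↑i), x⟫‖ ^ 2) + (∑' i : {i : ℕ // i ∉ Λ}, ‖⟪g i, x⟫‖ ^ 2)
        = ∑' i : ℕ, ‖⟪g i, x⟫‖ ^ 2 := hsplit
    linarith
  have hrnn : ∀ x : H, (0:ℝ) ≤ ∑' i : {i : ℕ // i ∉ Λ}, ‖⟪g i, x⟫‖ ^ 2 := fun x =>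
    tsum_nonneg fun i => sq_nonneg _
  -- the quadratic form of V
  have hinner : ∀ x : H, (⟪x, V x⟫ : ℂ)
      = ((∑' i : {i : ℕ // i ∉ Λ}, ‖⟪g i, x⟫‖ ^ 2 : ℝ) : ℂ) := by
    intro x
    have h1 : HasSum (fun i : {i : ℕ // i ∉ Λ} => (⟪g i, x⟫ : ℂ) * ⟪x, g i⟫) ⟪x, V x⟫ := by
      simpa [inner_smul_right] using (hgVsum x).mapL (innerSL ℂ x)
    have hterm : (fun i : {i : ℕ // i ∉ Λ} => (⟪g i, x⟫ : ℂ) * ⟪x, g i⟫)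
        = fun i : {i : ℕ // i ∉ Λ} => ((‖⟪g i, x⟫‖ ^ 2 : ℝ) : ℂ) := by
      funext i
      rw [← inner_conj_symm x (g i), Complex.mul_conj]
      norm_cast
      rw [Complex.normSq_eq_norm_sq]
    rw [hterm] at h1
    have h3 : HasSum (fun i : {i : ℕ // i ∉ Λ} => ((‖⟪g i, x⟫‖ ^ 2 : ℝ) : ℂ))
        (((∑' i : {i : ℕ // i ∉ Λ}, ‖⟪g i, x⟫‖ ^ 2 : ℝ) : ℂ)) := by
      exact (hrsum x).hasSum.mapL Complex.ofRealCLM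
    exact h1.unique h3
  constructor
  · rintro ⟨A, B, hA, hB, hfr⟩
    have hlow : ∀ x : H, A * ‖x‖ ^ 2 ≤ Complex.re ⟪x, V x⟫ := by
      intro x
      rw [hinner x]
      simpa using (hfr x).1
    have hnorm : ∀ x : H, A * ‖x‖ ≤ ‖V x‖ := by
      intro x
      rcases eq_or_ne x 0 with rfl | hx
      · simp
      · have h1 : A * ‖x‖ ^ 2 ≤ ‖(⟪x, V x⟫ : ℂ)‖ :=
          le_trans (hlow x) (le_trans (Complex.re_le_norm _) le_rfl)
        have h2 : ‖(⟪x, V x⟫ : ℂ)‖ ≤ ‖x‖ * ‖V x‖ := norm_inner_le_norm x (V x)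
        have hxpos : 0 < ‖x‖ := norm_pos_iff.mpr hx
        nlinarith
    have hinj : Function.Injective V := by
      intro a b hab
      have h0 : V (a - b) = 0 := by rw [map_sub, hab, sub_self]
      have h1 := hnorm (a - b)
      rw [h0, norm_zero] at h1
      have h2 : ‖a - b‖ ≤ 0 := by nlinarith [norm_nonneg (a - b)]
      have := le_antisymm h2 (norm_nonneg _)
      rwa [norm_eq_zero, sub_eq_zero] at this
    have hanti : AntilipschitzWith (⟨A, hA.le⟩ : NNReal)⁻¹ V := by
      apply V.antilipschitz_of_bound
      intro x
      have h1 := hnorm x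
      have hc : (((⟨A, hA.le⟩ : NNReal)⁻¹ : NNReal) : ℝ) = A⁻¹ := by
        exact NNReal.coe_inv (⟨A, hA.le⟩ : NNReal)
      rw [hc]
      calc ‖x‖ = A⁻¹ * (A * ‖x‖) := by field_simp
        _ ≤ A⁻¹ * ‖V x‖ := mul_le_mul_of_nonneg_left h1 (by positivity)
    have hclosed : IsClosed (Set.range V) := hanti.isClosed_range V.uniformContinuous
    set K : Submodule ℂ H := LinearMap.range (V : H →ₗ[ℂ] H) with hK
    have hKclosed : IsClosed (K : Set H) := by
      rw [hK, LinearMap.coe_range]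
      exact hclosed
    haveI : CompleteSpace K := hKclosed.completeSpace_coe
    have horth : Kᗮ = ⊥ := by
      rw [Submodule.eq_bot_iff]
      intro y hy
      have h0 : (⟪V y, y⟫ : ℂ) = 0 :=
        (Submodule.mem_orthogonal K y).mp hy (V y) ⟨y, rfl⟩
      have h1 : (⟪y, V y⟫ : ℂ) = 0 := by
        rw [← inner_conj_symm, h0, map_zero]
      have h2 := hlow y
      rw [h1] at h2
      simp only [Complex.zero_re] at h2
      have h3 : ‖y‖ ^ 2 = 0 := le_antisymm (by nlinarith) (sq_nonneg _)
      exact norm_eq_zero.mp ((pow_eq_zero_iff two_ne_zero).mp h3)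
    have hsurj : Function.Surjective V := by
      have hKtop : K = ⊤ := Submodule.orthogonal_eq_bot_iff.mp horth
      exact LinearMap.range_eq_top.mp hKtop
    exact ⟨hinj, hsurj⟩
  · intro hbij
    have hker : V.ker = ⊥ := (LinearMap.ker_eq_bot (f := (V : H →ₗ[ℂ] H))).mpr hbij.injective
    have hrange : V.range = ⊤ := (LinearMap.range_eq_top (f := (V : H →ₗ[ℂ] H))).mpr hbij.surjective
    set E := ContinuousLinearEquiv.ofBijective V hker hrange with hE
    set C : ℝ := ‖(E.symm : H →L[ℂ] H)‖ with hC
    have hCnn : 0 ≤ C := norm_nonneg _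
    refine ⟨(Bg * C ^ 2 + 1)⁻¹, Bg, by positivity, hBgpos, fun x => ?_⟩
    refine ⟨?_, hrle x⟩
    rcases eq_or_ne x 0 with rfl | hx
    · simpa using hrnn 0
    · set u : H := E.symm x with hu
      have hVu : V u = x := E.apply_symm_apply x
      have hule : ‖u‖ ≤ C * ‖x‖ := (E.symm : H →L[ℂ] H).le_opNorm x
      set r : H → ℝ := fun y => ∑' i : {i : ℕ // i ∉ Λ}, ‖⟪g i, y⟫‖ ^ 2 with hr
      have h1 : HasSum (fun i : {i : ℕ // i ∉ Λ} => (⟪g i, u⟫ : ℂ) * ⟪x, g i⟫) ⟪x, V u⟫ := by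
        simpa [inner_smul_right] using (hgVsum u).mapL (innerSL ℂ x)
      have hcs := cs_tsum (fun i : {i : ℕ // i ∉ Λ} => ‖(⟪g i, u⟫ : ℂ)‖)
        (fun i : {i : ℕ // i ∉ Λ} => ‖(⟪g i, x⟫ : ℂ)‖) (fun i => norm_nonneg _)
        (fun i => norm_nonneg _) (hrsum u) (hrsum x)
      have h2 : ‖(⟪x, V u⟫ : ℂ)‖ ≤ ∑' i : {i : ℕ // i ∉ Λ}, ‖(⟪g i, u⟫ : ℂ)‖ * ‖(⟪g i, x⟫ : ℂ)‖ := by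
        rw [← h1.tsum_eq]
        have hns : Summable (fun i : {i : ℕ // i ∉ Λ} => ‖(⟪g i, u⟫ : ℂ) * ⟪x, g i⟫‖) := by
          have : (fun i : {i : ℕ // i ∉ Λ} => ‖(⟪g i, u⟫ : ℂ) * ⟪x, g i⟫‖)
              = fun i : {i : ℕ // i ∉ Λ} => ‖(⟪g i, u⟫ : ℂ)‖ * ‖(⟪g i, x⟫ : ℂ)‖ := by
            funext i; rw [norm_mul, norm_inner_symm x]
          rw [this]; exact hcs.1
        refine le_trans (norm_tsum_le_tsum_norm hns) (le_of_eq ?_)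
        congr 1
        funext i
        rw [norm_mul, norm_inner_symm x]
      have h3 : ‖(⟪x, V u⟫ : ℂ)‖ = ‖x‖ ^ 2 := by
        rw [hVu, inner_self_eq_norm_sq_to_K]
        norm_cast
        simp [abs_of_nonneg (sq_nonneg ‖x‖)]
      have h4 : Real.sqrt (r u) ≤ Real.sqrt Bg * (C * ‖x‖) := by
        calc Real.sqrt (r u) ≤ Real.sqrt (Bg * ‖u‖ ^ 2) := Real.sqrt_le_sqrt (hrle u)
          _ = Real.sqrt Bg * ‖u‖ := by
              rw [Real.sqrt_mul hBgpos.le, Real.sqrt_sq (norm_nonneg _)]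
          _ ≤ Real.sqrt Bg * (C * ‖x‖) := by
              exact mul_le_mul_of_nonneg_left hule (Real.sqrt_nonneg _)
      have h5 : ‖x‖ ^ 2 ≤ Real.sqrt Bg * (C * ‖x‖) * Real.sqrt (r x) := by
        calc ‖x‖ ^ 2 = ‖(⟪x, V u⟫ : ℂ)‖ := h3.symm
          _ ≤ ∑' i : {i : ℕ // i ∉ Λ}, ‖(⟪g i, u⟫ : ℂ)‖ * ‖(⟪g i, x⟫ : ℂ)‖ := h2
          _ ≤ Real.sqrt (r u) * Real.sqrt (r x) := hcs.2
          _ ≤ Real.sqrt Bg * (C * ‖x‖) * Real.sqrt (r x) :=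
              mul_le_mul_of_nonneg_right h4 (Real.sqrt_nonneg _)
      -- square the inequality
      have hxpos : 0 < ‖x‖ := norm_pos_iff.mpr hx
      have hxpos2 : (0:ℝ) < ‖x‖ ^ 2 := by positivity
      have hsq : (‖x‖ ^ 2) * (‖x‖ ^ 2)
          ≤ (Real.sqrt Bg * (C * ‖x‖) * Real.sqrt (r x))
            * (Real.sqrt Bg * (C * ‖x‖) * Real.sqrt (r x)) :=
        mul_self_le_mul_self (by positivity) h5
      have e1 : (Real.sqrt Bg * (C * ‖x‖) * Real.sqrt (r x))
            * (Real.sqrt Bg * (C * ‖x‖) * Real.sqrt (r x))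
          = (Real.sqrt Bg * Real.sqrt Bg) * ((C * ‖x‖) * (C * ‖x‖))
            * (Real.sqrt (r x) * Real.sqrt (r x)) := by ring
      rw [Real.mul_self_sqrt hBgpos.le, Real.mul_self_sqrt (hrnn x)] at e1
      rw [e1] at hsq
      have h6 : ‖x‖ ^ 2 * ‖x‖ ^ 2 ≤ (Bg * C ^ 2 * r x) * ‖x‖ ^ 2 := by
        calc ‖x‖ ^ 2 * ‖x‖ ^ 2 ≤ Bg * (C * ‖x‖ * (C * ‖x‖)) * r x := hsq
          _ = (Bg * C ^ 2 * r x) * ‖x‖ ^ 2 := by ring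
      have h7 : ‖x‖ ^ 2 ≤ Bg * C ^ 2 * r x := le_of_mul_le_mul_right h6 hxpos2
      have h8 : ‖x‖ ^ 2 ≤ (Bg * C ^ 2 + 1) * r x := by
        rw [add_mul, one_mul]
        exact le_add_of_le_of_nonneg h7 (hrnn x)
      calc (Bg * C ^ 2 + 1)⁻¹ * ‖x‖ ^ 2
          ≤ (Bg * C ^ 2 + 1)⁻¹ * ((Bg * C ^ 2 + 1) * r x) := by
            apply mul_le_mul_of_nonneg_left h8
            positivity
        _ = r x := by field_simp
end

section
/- Let H be a complex Hilbert space, f : ℕ → H a frame for H, and m ∈ ℕ. Assume: (a) the subfamily {f j : j ≥ m} is a frame for H; (b) for every square-summable family β : {j : j ≥ m} → ℂ there exists x ∈ H with ⟨x, f j⟩ = β j for all j ≥ m (the analysis operator of {f j}_{j≥m} is onto, as holds when {f j}_{j≥m} is an exact frame); (c) there exist coefficients d : Fin m → (ℕ → ℂ) with ∑_{j≥m} |d i j|² < ∞ and f i = ∑_{j≥m} (d i j) · f j for every i < m. Then for every square-summable α : ℕ → ℂ the following are equivalent: (1) there exists x ∈ H with ⟨x, f i⟩ = α i for all i ∈ ℕ;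 (2) α i = ∑_{j≥m} conj(d i j) · α j for every i < m. -/
open scoped ComplexInnerProductSpace

variable {H : Type*} [NormedAddCommGroup H] [InnerProductSpace ℂ H] [CompleteSpace H]

theorem range_of_analysis_operator_eq_nullspace
    (f : ℕ → H) (hf : IsFrame f) (m : ℕ)
    -- (a) the subfamily `{f j : j ≥ m}` is a frame for `H`
    (ha : ∃ A B : ℝ, 0 < A ∧ 0 < B ∧ ∀ x : H,
      A * ‖x‖ ^ 2 ≤ ∑' j : {j : ℕ // m ≤ j}, ‖⟪f j, x⟫‖ ^ 2 ∧
        ∑' j : {j : ℕ // m ≤ j}, ‖⟪f j, x⟫‖ ^ 2 ≤ B * ‖x‖ ^ 2)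
    -- (b) the analysis operator of `{f j : j ≥ m}` is onto `ℓ²`
    (hb : ∀ β : {j : ℕ // m ≤ j} → ℂ, Summable (fun j => ‖β j‖ ^ 2) →
      ∃ x : H, ∀ j : {j : ℕ // m ≤ j}, ⟪f j, x⟫ = β j)
    -- (c) expansion coefficients of the erased vectors
    (d : Fin m → ℕ → ℂ)
    (hd : ∀ i : Fin m, Summable (fun j : {j : ℕ // m ≤ j} => ‖d i j‖ ^ 2) ∧
      HasSum (fun j : {j : ℕ // m ≤ j} => d i j • f j) (f i))
    (α : ℕ → ℂ) (hα : Summable fun i : ℕ => ‖α i‖ ^ 2) :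
    (∃ x : H, ∀ i : ℕ, ⟪f i, x⟫ = α i) ↔
      ∀ i : Fin m, α i = ∑' j : {j : ℕ // m ≤ j}, (starRingEnd ℂ) (d i j) * α j := by
  have key : ∀ (x : H) (i : Fin m),
      HasSum (fun j : {j : ℕ // m ≤ j} => (starRingEnd ℂ) (d i j) * ⟪f j, x⟫) ⟪f (i : ℕ), x⟫ := by
    intro x i
    have h1 := ((innerSL ℂ x).hasSum (hd i).2)
    have h2 := h1.map ((starRingEnd ℂ) : ℂ →+* ℂ) continuous_star
    simpa [inner_smul_right, map_mul, inner_conj_symm, Function.comp_def] using h2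
  constructor
  · rintro ⟨x, hx⟩ i
    have := (key x i).tsum_eq
    simp only [hx] at this
    exact this.symm
  · intro h2
    obtain ⟨x, hx⟩ := hb (fun j => α j) (hα.subtype _)
    refine ⟨x, fun i => ?_⟩
    by_cases hi : m ≤ i
    · exact hx ⟨i, hi⟩
    · have hlt : i < m := Nat.lt_of_not_le hi
      have := (key x ⟨i, hlt⟩).tsum_eq
      simp only [hx] at this
      rw [← this]
      exact (h2 ⟨i, hlt⟩).symm
end

section
/- Let H be a complex Hilbert space, m ∈ ℕ, and f : ℕ → H an m-erasure robust frame for H with analysis operator Θ : H → ℓ²(ℕ, ℂ), Θ x = (⟨x, f i⟩)_{i∈ℕ}. Let W be a complex vector space and Γ : ℓ²(ℕ, ℂ) → W a linear map whose kernel equals the range of Θ. Then for any m distinct indices k₁, …, k_m ∈ ℕ, the vectors Γ(δ_{k₁}), …, Γ(δ_{k_m}) are linearly independent in W, where δ_k denotes the k-th standard unit vector of ℓ²(ℕ, ℂ). -/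
open scoped ComplexInnerProductSpace

variable {H : Type*} [NormedAddCommGroup H] [InnerProductSpace ℂ H] [CompleteSpace H]

/-- `f` is an `m`-erasure robust frame: removing any `m` indices leaves a frame for `H`. -/
def ErasureRobust (f : ℕ → H) (m : ℕ) : Prop :=
  ∀ Λ : Finset ℕ, Λ.card = m → IsFrameOn f (↑Λ : Set ℕ)

theorem erasure_robust_gamma_columns_linearIndependent
    (m : ℕ) (f : ℕ → H) (hf : IsFrame f) (hrob : ErasureRobust f m)
    (Θ : H →L[ℂ] lp (fun _ : ℕ => ℂ) 2)
    (hΘ : ∀ (x : H) (i : ℕ), Θ x i = ⟪f i, x⟫)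
    {W : Type*} [AddCommGroup W] [Module ℂ W]
    (Γ : lp (fun _ : ℕ => ℂ) 2 →ₗ[ℂ] W)
    (hker : ∀ v : lp (fun _ : ℕ => ℂ) 2, Γ v = 0 ↔ ∃ x : H, Θ x = v)
    (k : Fin m → ℕ) (hk : Function.Injective k) :
    LinearIndependent ℂ (fun i : Fin m => Γ (lp.single 2 (k i) (1 : ℂ))) := by
  rw [Fintype.linearIndependent_iff]
  intro g hg j
  set v : lp (fun _ : ℕ => ℂ) 2 := ∑ i, g i • lp.single 2 (k i) (1 : ℂ) with hv
  have hΓv : Γ v = 0 := by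
    rw [hv, map_sum]
    simpa using hg
  obtain ⟨x, hx⟩ := (hker v).mp hΓv
  -- coordinates of v
  have hvcoord : ∀ n : ℕ, v n = ∑ i, if n = k i then g i else 0 := by
    intro n
    rw [hv, lp.coeFn_sum]
    simp only [Finset.sum_apply, lp.coeFn_smul, Pi.smul_apply]
    refine Finset.sum_congr rfl fun i _ => ?_
    rcases eq_or_ne n (k i) with h | h
    · simp [h, lp.single_apply_self]
    · simp [h, lp.single_apply_ne _ _ _ h]
  set Λ : Finset ℕ := Finset.image k Finset.univ with hΛ
  have hcard : Λ.card = m := by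
    rw [hΛ, Finset.card_image_of_injective _ hk, Finset.card_univ, Fintype.card_fin]
  obtain ⟨A, B, hA, hB, hAB⟩ := hrob Λ hcard
  have hx0 : x = 0 := by
    have hzero : ∀ i : {i : ℕ // i ∉ (↑Λ : Set ℕ)}, ‖⟪f (i : ℕ), x⟫‖ ^ 2 = 0 := by
      rintro ⟨n, hn⟩
      have hn' : ∀ i : Fin m, n ≠ k i := by
        intro i hni
        exact hn (by simp [hΛ, hni])
      have : (Θ x : ℕ → ℂ) n = (0 : ℂ) := by
        rw [hx, hvcoord n]
        simp [hn']
      rw [← hΘ x n, this]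
      simp
    have hle := (hAB x).1
    rw [tsum_congr hzero, tsum_zero] at hle
    by_contra h
    have hpos : 0 < ‖x‖ := norm_pos_iff.mpr h
    exact absurd hle (not_le.mpr (mul_pos hA (pow_pos hpos 2)))
  have hv0 : v = 0 := by rw [← hx, hx0, map_zero]
  have := hvcoord (k j)
  rw [hv0] at this
  have h0 : (0 : ℂ) = ∑ i, if k j = k i then g i else 0 := by simpa using this
  simp only [hk.eq_iff, Finset.sum_ite_eq, Finset.mem_univ, if_true] at h0
  exact h0.symm
end

section
/- Let H be a complex Hilbert space, f : ℕ → H a frame for H with lower frame bound A > 0 and upper frame bound B > 0, Λ ⊆ ℕ a set with |Λ| = m, and C ≥ 0. Assume that for every i ∈ Λ there exists aᵢ : ℕ → ℂ with ∑_{j∉Λ} |aᵢ j|² ≤ C² and f i = ∑_{j∉Λ} (aᵢ j) · f j (series converging in H). Then {f j : j ∉ Λ} is a frame for H; more precisely, for all x ∈ H, (A/(C²·m + 1))·‖x‖² ≤ ∑_{j∉Λ} |⟨x, f j⟩|² ≤ B·‖x‖². -/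
open scoped ComplexInnerProductSpace

variable {H : Type*} [NormedAddCommGroup H] [InnerProductSpace ℂ H] [CompleteSpace H]

/-- Cauchy–Schwarz for infinite sums of nonnegative reals. -/
lemma tsum_mul_le_sqrt_mul_sqrt {ι : Type*} (f g : ι → ℝ) (hf0 : ∀ i, 0 ≤ f i)
    (hg0 : ∀ i, 0 ≤ g i) (hf : Summable fun i => f i ^ 2) (hg : Summable fun i => g i ^ 2) :
    ∑' i, f i * g i ≤ Real.sqrt (∑' i, f i ^ 2) * Real.sqrt (∑' i, g i ^ 2) := by
  have hfg : Summable fun i => f i * g i := by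
    apply Summable.of_nonneg_of_le (fun i => mul_nonneg (hf0 i) (hg0 i))
      (fun i => ?_) ((hf.add hg).div_const 2)
    have := sq_nonneg (f i - g i)
    nlinarith
  apply Summable.tsum_le_of_sum_le hfg
  intro s
  have h1 : (∑ i ∈ s, f i * g i) ^ 2 ≤ (∑ i ∈ s, f i ^ 2) * ∑ i ∈ s, g i ^ 2 :=
    Finset.sum_mul_sq_le_sq_mul_sq s f g
  have h2 : (∑ i ∈ s, f i ^ 2) ≤ ∑' i, f i ^ 2 := Summable.sum_le_tsum s (fun i _ => sq_nonneg _) hf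
  have h3 : (∑ i ∈ s, g i ^ 2) ≤ ∑' i, g i ^ 2 := Summable.sum_le_tsum s (fun i _ => sq_nonneg _) hg
  have h4 : 0 ≤ ∑ i ∈ s, g i ^ 2 := Finset.sum_nonneg fun i _ => sq_nonneg _
  have h5 : 0 ≤ ∑ i ∈ s, f i ^ 2 := Finset.sum_nonneg fun i _ => sq_nonneg _
  calc ∑ i ∈ s, f i * g i ≤ Real.sqrt ((∑ i ∈ s, f i ^ 2) * ∑ i ∈ s, g i ^ 2) := by
        rw [show (∑ i ∈ s, f i * g i) = Real.sqrt ((∑ i ∈ s, f i * g i) ^ 2) from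
          (Real.sqrt_sq (Finset.sum_nonneg fun i _ => mul_nonneg (hf0 i) (hg0 i))).symm]
        exact Real.sqrt_le_sqrt h1
    _ ≤ Real.sqrt ((∑' i, f i ^ 2) * ∑' i, g i ^ 2) :=
        Real.sqrt_le_sqrt (mul_le_mul h2 h3 h4 (le_trans h5 h2))
    _ = Real.sqrt (∑' i, f i ^ 2) * Real.sqrt (∑' i, g i ^ 2) := Real.sqrt_mul
        (le_trans h5 h2) _

theorem excess_coefficients_give_subframe_bounds
    (f : ℕ → H) (A B : ℝ) (hA : 0 < A) (hB : 0 < B)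
    (hf : ∀ x : H, A * ‖x‖ ^ 2 ≤ ∑' i : ℕ, ‖⟪f i, x⟫‖ ^ 2 ∧
      ∑' i : ℕ, ‖⟪f i, x⟫‖ ^ 2 ≤ B * ‖x‖ ^ 2)
    (m : ℕ) (Λ : Finset ℕ) (hΛ : Λ.card = m) (C : ℝ) (hC : 0 ≤ C)
    (hcoef : ∀ i ∈ Λ, ∃ a : ℕ → ℂ,
      Summable (fun j : {j : ℕ // j ∉ Λ} => ‖a j‖ ^ 2) ∧
      (∑' j : {j : ℕ // j ∉ Λ}, ‖a j‖ ^ 2) ≤ C ^ 2 ∧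
      HasSum (fun j : {j : ℕ // j ∉ Λ} => a j • f j) (f i)) :
    ∀ x : H,
      (A / (C ^ 2 * (m : ℝ) + 1)) * ‖x‖ ^ 2 ≤ ∑' j : {j : ℕ // j ∉ Λ}, ‖⟪f j, x⟫‖ ^ 2 ∧
        ∑' j : {j : ℕ // j ∉ Λ}, ‖⟪f j, x⟫‖ ^ 2 ≤ B * ‖x‖ ^ 2 := by
  intro x
  set g : ℕ → ℝ := fun i => ‖⟪f i, x⟫‖ ^ 2 with hg
  have hg0 : ∀ i, 0 ≤ g i := fun i => sq_nonneg _
  -- full family is summable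
  have hsum : Summable g := by
    by_contra h
    have h0 : ∑' i, g i = 0 := tsum_eq_zero_of_not_summable h
    have := (hf x).1
    rw [h0] at this
    have hx2 : ‖x‖ ^ 2 = 0 := le_antisymm (by nlinarith) (sq_nonneg _)
    have hx0 : x = 0 := norm_eq_zero.mp (pow_eq_zero_iff two_ne_zero |>.mp hx2)
    apply h
    have : g = fun _ => 0 := by
      funext i; simp [hg, hx0]
    rw [this]
    exact summable_zero
  have hsub : Summable fun j : {j : ℕ // j ∉ Λ} => g j := by
    have := hsum.subtype ((↑Λ : Set ℕ))ᶜ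
    exact this
  set S : ℝ := ∑' j : {j : ℕ // j ∉ Λ}, g j with hS
  have hS0 : 0 ≤ S := tsum_nonneg fun j => hg0 j
  -- decomposition of the full sum
  have hdecomp : (∑ i ∈ Λ, g i) + S = ∑' i, g i := Summable.sum_add_tsum_compl hsum
  -- upper bound
  have hupper : S ≤ B * ‖x‖ ^ 2 := by
    have h1 : S ≤ ∑' i, g i := by
      rw [← hdecomp]
      have : 0 ≤ ∑ i ∈ Λ, g i := Finset.sum_nonneg fun i _ => hg0 i
      linarith
    exact h1.trans (hf x).2
  refine ⟨?_, hupper⟩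
  -- key estimate: for each i ∈ Λ, g i ≤ C^2 * S
  have hkey : ∀ i ∈ Λ, g i ≤ C ^ 2 * S := by
    intro i hi
    obtain ⟨a, ha_sum, ha_le, ha_has⟩ := hcoef i hi
    have hinner : HasSum (fun j : {j : ℕ // j ∉ Λ} => a j * ⟪x, f (j : ℕ)⟫) ⟪x, f i⟫ := by
      have := ha_has.mapL (innerSL ℂ x)
      simpa [inner_smul_right] using this
    have hsub' : Summable fun j : {j : ℕ // j ∉ Λ} => ‖⟪x, f (j : ℕ)⟫‖ ^ 2 := by
      have he : (fun j : {j : ℕ // j ∉ Λ} => ‖⟪x, f (j : ℕ)⟫‖ ^ 2) = fun j : {j : ℕ // j ∉ Λ} => g (j : ℕ) := by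
        funext j; rw [hg]; rw [norm_inner_symm]
      rw [he]; exact hsub
    have hnorm_sum : Summable fun j : {j : ℕ // j ∉ Λ} => ‖a j‖ * ‖⟪x, f (j : ℕ)⟫‖ := by
      apply Summable.of_nonneg_of_le
        (fun j => mul_nonneg (norm_nonneg _) (norm_nonneg _)) (fun j => ?_)
        ((ha_sum.add hsub').div_const 2)
      have := sq_nonneg (‖a j‖ - ‖⟪x, f (j : ℕ)⟫‖)
      have h2 : ‖⟪x, f (j : ℕ)⟫‖ ^ 2 = g j := by rw [hg]; rw [norm_inner_symm]
      nlinarith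
    have hb : ‖⟪x, f i⟫‖ ≤ ∑' j : {j : ℕ // j ∉ Λ}, ‖a j‖ * ‖⟪x, f (j : ℕ)⟫‖ := by
      calc ‖⟪x, f i⟫‖ ≤ ∑' j : {j : ℕ // j ∉ Λ}, ‖a j * ⟪x, f (j : ℕ)⟫‖ :=
            hinner.tsum_eq ▸ norm_tsum_le_tsum_norm (by simpa [norm_mul] using hnorm_sum)
        _ = ∑' j : {j : ℕ // j ∉ Λ}, ‖a j‖ * ‖⟪x, f (j : ℕ)⟫‖ := by
            simp [norm_mul]
    have hcs : (∑' j : {j : ℕ // j ∉ Λ}, ‖a j‖ * ‖⟪x, f (j : ℕ)⟫‖) ≤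
        Real.sqrt (∑' j : {j : ℕ // j ∉ Λ}, ‖a j‖ ^ 2) *
          Real.sqrt (∑' j : {j : ℕ // j ∉ Λ}, ‖⟪x, f (j : ℕ)⟫‖ ^ 2) :=
      tsum_mul_le_sqrt_mul_sqrt _ _ (fun j => norm_nonneg _) (fun j => norm_nonneg _)
        ha_sum hsub'
    have hSx : (∑' j : {j : ℕ // j ∉ Λ}, ‖⟪x, f (j : ℕ)⟫‖ ^ 2) = S := by
      rw [hS]; congr 1; funext j; rw [hg]; rw [norm_inner_symm]
    have hsq1 : Real.sqrt (∑' j : {j : ℕ // j ∉ Λ}, ‖a j‖ ^ 2) ≤ C := by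
      rw [show C = Real.sqrt (C ^ 2) from (Real.sqrt_sq hC).symm]
      exact Real.sqrt_le_sqrt ha_le
    have hbound : ‖⟪x, f i⟫‖ ≤ C * Real.sqrt S := by
      calc ‖⟪x, f i⟫‖ ≤ _ := hb
        _ ≤ _ := hcs
        _ ≤ C * Real.sqrt S := by
            rw [hSx]
            exact mul_le_mul_of_nonneg_right hsq1 (Real.sqrt_nonneg _)
    have hgi : g i = ‖⟪x, f i⟫‖ ^ 2 := by rw [hg]; rw [norm_inner_symm]
    rw [hgi]
    calc ‖⟪x, f i⟫‖ ^ 2 ≤ (C * Real.sqrt S) ^ 2 := by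
          apply sq_le_sq' _ hbound
          have := norm_nonneg (⟪x, f i⟫ : ℂ)
          nlinarith [mul_nonneg hC (Real.sqrt_nonneg S)]
      _ = C ^ 2 * S := by
          rw [mul_pow, Real.sq_sqrt hS0]
  -- combine
  have hΛsum : (∑ i ∈ Λ, g i) ≤ (m : ℝ) * (C ^ 2 * S) := by
    calc (∑ i ∈ Λ, g i) ≤ ∑ _i ∈ Λ, C ^ 2 * S := Finset.sum_le_sum hkey
      _ = (m : ℝ) * (C ^ 2 * S) := by rw [Finset.sum_const, hΛ, nsmul_eq_mul]
  have hmain : A * ‖x‖ ^ 2 ≤ (C ^ 2 * (m : ℝ) + 1) * S := by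
    have h1 := (hf x).1
    rw [← hdecomp] at h1
    nlinarith
  have hpos : 0 < C ^ 2 * (m : ℝ) + 1 := by positivity
  rw [div_mul_eq_mul_div, div_le_iff₀ hpos]
  calc A * ‖x‖ ^ 2 ≤ (C ^ 2 * (m : ℝ) + 1) * S := hmain
    _ = S * (C ^ 2 * (m : ℝ) + 1) := mul_comm _ _
end

section
/- Let H be a complex Hilbert space and f : ℕ → H a Besselian frame for H. Then the following are equivalent: (i) for every m ∈ ℕ, the subfamily {f i : i ≠ m} is a frame for H (i.e., f is robust to 1 erasure); (ii) there exists a : ℕ → ℂ with a i ≠ 0 for every i, ∑_{i∈ℕ} |a i|² < ∞, and ∑_{i∈ℕ} (a i) · f i = 0 (the series converging in H). -/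
open scoped ComplexInnerProductSpace ENNReal NNReal

section AuxCS
variable {ι : Type*}

private lemma finset_cs' (s : Finset ι) (u v : ι → ℝ) (hu : ∀ i, 0 ≤ u i) (hv : ∀ i, 0 ≤ v i) :
    ∑ i ∈ s, u i * v i ≤ Real.sqrt (∑ i ∈ s, u i ^ 2) * Real.sqrt (∑ i ∈ s, v i ^ 2) := by
  have h1 := Finset.sum_mul_sq_le_sq_mul_sq s u v
  have h2 : ∑ i ∈ s, u i * v i = Real.sqrt ((∑ i ∈ s, u i * v i) ^ 2) :=
    (Real.sqrt_sq (Finset.sum_nonneg fun i _ => mul_nonneg (hu i) (hv i))).symm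
  rw [h2, ← Real.sqrt_mul (Finset.sum_nonneg fun i _ => sq_nonneg _)]
  exact Real.sqrt_le_sqrt h1

private lemma summable_norm_mul' {u v : ι → ℂ}
    (hu : Summable fun i => ‖u i‖ ^ 2) (hv : Summable fun i => ‖v i‖ ^ 2) :
    Summable fun i => ‖u i‖ * ‖v i‖ := by
  apply Summable.of_nonneg_of_le (fun i => by positivity)
    (fun i => ?_) ((hu.add hv).div_const 2)
  have := sq_nonneg (‖u i‖ - ‖v i‖)
  nlinarith [norm_nonneg (u i), norm_nonneg (v i)]

private lemma tsum_norm_mul_le' {u v : ι → ℂ}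
    (hu : Summable fun i => ‖u i‖ ^ 2) (hv : Summable fun i => ‖v i‖ ^ 2) :
    ∑' i, ‖u i‖ * ‖v i‖ ≤
      Real.sqrt (∑' i, ‖u i‖ ^ 2) * Real.sqrt (∑' i, ‖v i‖ ^ 2) := by
  apply Summable.tsum_le_of_sum_le (summable_norm_mul' hu hv)
  intro s
  refine (finset_cs' s _ _ (fun i => norm_nonneg _) (fun i => norm_nonneg _)).trans ?_
  gcongr <;> first
    | exact Summable.sum_le_tsum s (fun i _ => by positivity) hu
    | exact Summable.sum_le_tsum s (fun i _ => by positivity) hv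

private lemma norm_tsum_mul_le' {u v : ι → ℂ}
    (hu : Summable fun i => ‖u i‖ ^ 2) (hv : Summable fun i => ‖v i‖ ^ 2) :
    ‖∑' i, u i * v i‖ ≤
      Real.sqrt (∑' i, ‖u i‖ ^ 2) * Real.sqrt (∑' i, ‖v i‖ ^ 2) := by
  refine le_trans ?_ (tsum_norm_mul_le' hu hv)
  have := norm_tsum_le_tsum_norm (f := fun i => u i * v i) ?_
  · simpa [norm_mul] using this
  · simpa [norm_mul] using summable_norm_mul' hu hv

end AuxCS

section AuxBessel
set_option linter.unusedSectionVars false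
variable {H : Type*} [NormedAddCommGroup H] [InnerProductSpace ℂ H] [CompleteSpace H]
variable {ι : Type*}

private lemma finsum_smul_bound' (g : ι → H) {B : ℝ} (hB0 : 0 ≤ B)
    (hS : ∀ x : H, Summable fun i => ‖⟪g i, x⟫‖ ^ 2)
    (hB : ∀ x : H, ∑' i, ‖⟪g i, x⟫‖ ^ 2 ≤ B * ‖x‖ ^ 2)
    (c : ι → ℂ) (s : Finset ι) :
    ‖∑ i ∈ s, c i • g i‖ ≤ Real.sqrt B * Real.sqrt (∑ i ∈ s, ‖c i‖ ^ 2) := by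
  set v := ∑ i ∈ s, c i • g i with hv
  rcases eq_or_lt_of_le (norm_nonneg v) with h0 | h0
  · rw [← h0]; positivity
  have key : ‖v‖ ^ 2 ≤ Real.sqrt (∑ i ∈ s, ‖c i‖ ^ 2) * (Real.sqrt B * ‖v‖) := by
    have h1 : (⟪v, v⟫ : ℂ) = ∑ i ∈ s, (starRingEnd ℂ) (c i) * ⟪g i, v⟫ := by
      rw [hv, sum_inner]
      exact Finset.sum_congr rfl fun i _ => inner_smul_left _ _ _
    have hvv : ‖(⟪v, v⟫ : ℂ)‖ = ‖v‖ ^ 2 := by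
      rw [inner_self_eq_norm_sq_to_K (𝕜 := ℂ) v]
      simp [norm_pow, Complex.norm_real, _root_.abs_of_nonneg (norm_nonneg v)]
    have h2 : ‖v‖ ^ 2 ≤ ∑ i ∈ s, ‖c i‖ * ‖⟪g i, v⟫‖ := by
      calc ‖v‖ ^ 2 = ‖(⟪v, v⟫ : ℂ)‖ := hvv.symm
        _ = ‖∑ i ∈ s, (starRingEnd ℂ) (c i) * ⟪g i, v⟫‖ := by rw [h1]
        _ ≤ ∑ i ∈ s, ‖(starRingEnd ℂ) (c i) * ⟪g i, v⟫‖ := norm_sum_le _ _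
        _ = ∑ i ∈ s, ‖c i‖ * ‖⟪g i, v⟫‖ :=
            Finset.sum_congr rfl fun i _ => by rw [norm_mul, RCLike.norm_conj]
    have h3 : ∑ i ∈ s, ‖c i‖ * ‖⟪g i, v⟫‖ ≤
        Real.sqrt (∑ i ∈ s, ‖c i‖ ^ 2) * Real.sqrt (∑ i ∈ s, ‖⟪g i, v⟫‖ ^ 2) :=
      finset_cs' s _ _ (fun i => norm_nonneg _) (fun i => norm_nonneg _)
    have h4 : ∑ i ∈ s, ‖⟪g i, v⟫‖ ^ 2 ≤ B * ‖v‖ ^ 2 :=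
      le_trans (Summable.sum_le_tsum s (fun i _ => by positivity) (hS v)) (hB v)
    have h5 : Real.sqrt (∑ i ∈ s, ‖⟪g i, v⟫‖ ^ 2) ≤ Real.sqrt B * ‖v‖ := by
      rw [← Real.sqrt_sq (norm_nonneg v), ← Real.sqrt_mul hB0]
      exact Real.sqrt_le_sqrt (by simpa using h4)
    calc ‖v‖ ^ 2 ≤ ∑ i ∈ s, ‖c i‖ * ‖⟪g i, v⟫‖ := h2
      _ ≤ _ := h3
      _ ≤ _ := mul_le_mul_of_nonneg_left h5 (Real.sqrt_nonneg _)
  nlinarith [Real.sqrt_nonneg B, Real.sqrt_nonneg (∑ i ∈ s, ‖c i‖ ^ 2), h0]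

private lemma summable_smul_of_bessel' (g : ι → H) {B : ℝ} (hB0 : 0 ≤ B)
    (hS : ∀ x : H, Summable fun i => ‖⟪g i, x⟫‖ ^ 2)
    (hB : ∀ x : H, ∑' i, ‖⟪g i, x⟫‖ ^ 2 ≤ B * ‖x‖ ^ 2)
    {c : ι → ℂ} (hc : Summable fun i => ‖c i‖ ^ 2) :
    Summable (fun i => c i • g i) := by
  rw [summable_iff_vanishing]
  intro e he
  obtain ⟨ε, hε, hball⟩ := Metric.mem_nhds_iff.mp he
  set δ := (ε / (Real.sqrt B + 1)) ^ 2 with hδ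
  have hδ0 : 0 < δ := by positivity
  obtain ⟨s, hs⟩ := (summable_iff_vanishing.mp hc) (Metric.ball 0 δ) (Metric.ball_mem_nhds 0 hδ0)
  refine ⟨s, fun t ht => ?_⟩
  apply hball
  rw [Metric.mem_ball, dist_zero_right]
  have h1 : ∑ i ∈ t, ‖c i‖ ^ 2 < δ := by
    have := hs t ht
    rw [Metric.mem_ball, dist_zero_right] at this
    exact lt_of_le_of_lt (le_abs_self _) (by simpa using this)
  calc ‖∑ i ∈ t, c i • g i‖ ≤ Real.sqrt B * Real.sqrt (∑ i ∈ t, ‖c i‖ ^ 2) :=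
        finsum_smul_bound' g hB0 hS hB c t
    _ < Real.sqrt B * Real.sqrt δ + Real.sqrt δ := by
        have hsq : Real.sqrt (∑ i ∈ t, ‖c i‖ ^ 2) < Real.sqrt δ :=
          Real.sqrt_lt_sqrt (Finset.sum_nonneg fun i _ => by positivity) h1
        have hsd : (0:ℝ) < Real.sqrt δ := Real.sqrt_pos.mpr hδ0
        nlinarith [Real.sqrt_nonneg B]
    _ = (Real.sqrt B + 1) * Real.sqrt δ := by ring
    _ = ε := by
        rw [hδ, Real.sqrt_sq (by positivity)]
        field_simp

private lemma norm_tsum_smul_le' (g : ι → H) {B : ℝ} (hB0 : 0 ≤ B)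
    (hS : ∀ x : H, Summable fun i => ‖⟪g i, x⟫‖ ^ 2)
    (hB : ∀ x : H, ∑' i, ‖⟪g i, x⟫‖ ^ 2 ≤ B * ‖x‖ ^ 2)
    {c : ι → ℂ} (hc : Summable fun i => ‖c i‖ ^ 2) :
    ‖∑' i, c i • g i‖ ≤ Real.sqrt B * Real.sqrt (∑' i, ‖c i‖ ^ 2) := by
  have hsum := summable_smul_of_bessel' g hB0 hS hB hc
  refine le_of_tendsto (hsum.hasSum.norm) (Filter.Eventually.of_forall fun s => ?_)
  calc ‖∑ i ∈ s, c i • g i‖ ≤ Real.sqrt B * Real.sqrt (∑ i ∈ s, ‖c i‖ ^ 2) :=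
        finsum_smul_bound' g hB0 hS hB c s
    _ ≤ _ := mul_le_mul_of_nonneg_left
        (Real.sqrt_le_sqrt (Summable.sum_le_tsum s (fun i _ => by positivity) hc)) (Real.sqrt_nonneg _)

private lemma summable_coeffs_of_lower' (g : ι → H) {A : ℝ} (hA : 0 < A)
    (h : ∀ x : H, A * ‖x‖ ^ 2 ≤ ∑' i, ‖⟪g i, x⟫‖ ^ 2) (x : H) :
    Summable fun i => ‖⟪g i, x⟫‖ ^ 2 := by
  by_contra hns
  have h0 := tsum_eq_zero_of_not_summable hns
  have := h x
  rw [h0] at this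
  have hx : x = 0 := by
    have h1 : ‖x‖ ^ 2 ≤ 0 := by nlinarith
    have h2 : ‖x‖ = 0 := by nlinarith [norm_nonneg x, sq_nonneg ‖x‖]
    simpa using h2
  subst hx
  exact hns (by simpa using summable_zero)

private lemma frame_surjective' (g : ι → H) {A B : ℝ} (hA : 0 < A) (hB : 0 < B)
    (h : ∀ x : H, A * ‖x‖ ^ 2 ≤ ∑' i, ‖⟪g i, x⟫‖ ^ 2 ∧
      ∑' i, ‖⟪g i, x⟫‖ ^ 2 ≤ B * ‖x‖ ^ 2) (v : H) :
    ∃ y : H, HasSum (fun i => ⟪g i, y⟫ • g i) v := by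
  have hS : ∀ x : H, Summable fun i => ‖⟪g i, x⟫‖ ^ 2 :=
    summable_coeffs_of_lower' g hA (fun x => (h x).1)
  have hBb : ∀ x : H, ∑' i, ‖⟪g i, x⟫‖ ^ 2 ≤ B * ‖x‖ ^ 2 := fun x => (h x).2
  have hsum : ∀ x : H, Summable fun i => ⟪g i, x⟫ • g i :=
    fun x => summable_smul_of_bessel' g hB.le hS hBb (hS x)
  let Slin : H →ₗ[ℂ] H :=
    { toFun := fun x => ∑' i, ⟪g i, x⟫ • g i
      map_add' := fun x y => by
        show ∑' i, ⟪g i, x + y⟫ • g i = _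
        have heq : (fun i => ⟪g i, x + y⟫ • g i)
            = fun i => ⟪g i, x⟫ • g i + ⟪g i, y⟫ • g i := by
          funext i; rw [inner_add_right, add_smul]
        rw [heq, Summable.tsum_add (hsum x) (hsum y)]
      map_smul' := fun c x => by
        show ∑' i, ⟪g i, c • x⟫ • g i = c • ∑' i, ⟪g i, x⟫ • g i
        rw [← ((hsum x).hasSum.const_smul c).tsum_eq]
        congr 1
        funext i
        rw [inner_smul_right, mul_smul] }
  have hbound : ∀ x : H, ‖Slin x‖ ≤ B * ‖x‖ := by
    intro x
    have h1 : ‖Slin x‖ ≤ Real.sqrt B * Real.sqrt (∑' i, ‖⟪g i, x⟫‖ ^ 2) :=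
      norm_tsum_smul_le' g hB.le hS hBb (hS x)
    have h2 : Real.sqrt (∑' i, ‖⟪g i, x⟫‖ ^ 2) ≤ Real.sqrt B * ‖x‖ := by
      rw [← Real.sqrt_sq (norm_nonneg x), ← Real.sqrt_mul hB.le]
      exact Real.sqrt_le_sqrt (by simpa using hBb x)
    calc ‖Slin x‖ ≤ Real.sqrt B * Real.sqrt (∑' i, ‖⟪g i, x⟫‖ ^ 2) := h1
      _ ≤ Real.sqrt B * (Real.sqrt B * ‖x‖) :=
          mul_le_mul_of_nonneg_left h2 (Real.sqrt_nonneg _)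
      _ = B * ‖x‖ := by rw [← mul_assoc, Real.mul_self_sqrt hB.le]
  let S : H →L[ℂ] H := LinearMap.mkContinuous Slin B hbound
  have hSapp : ∀ x, S x = ∑' i, ⟪g i, x⟫ • g i := fun x => rfl
  have hkey : ∀ x : H, (⟪x, S x⟫ : ℂ) = ((∑' i, ‖⟪g i, x⟫‖ ^ 2 : ℝ) : ℂ) := by
    intro x
    have h1 : HasSum (fun i => (⟪g i, x⟫ * ⟪x, g i⟫ : ℂ)) ⟪x, S x⟫ := by
      have := (innerSL ℂ x).hasSum (hsum x).hasSum
      simpa [hSapp] using this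
    have h2 : (fun i => (⟪g i, x⟫ * ⟪x, g i⟫ : ℂ))
        = fun i => ((‖⟪g i, x⟫‖ ^ 2 : ℝ) : ℂ) := by
      funext i
      rw [← inner_conj_symm x (g i), Complex.mul_conj']
      push_cast
      ring
    rw [h2] at h1
    have h3 : HasSum (fun i => ((‖⟪g i, x⟫‖ ^ 2 : ℝ) : ℂ))
        ((∑' i, ‖⟪g i, x⟫‖ ^ 2 : ℝ) : ℂ) :=
      Complex.ofRealCLM.hasSum (hS x).hasSum
    exact h1.unique h3
  have hlow : ∀ x : H, A * ‖x‖ ^ 2 ≤ Complex.re ⟪x, S x⟫ := by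
    intro x
    rw [hkey x]
    simpa using (h x).1
  have hanti : ∀ x : H, ‖x‖ ≤ A⁻¹ * ‖S x‖ := by
    intro x
    rcases eq_or_ne x 0 with rfl | hx
    · simp
    have hxn : 0 < ‖x‖ := norm_pos_iff.mpr hx
    have h1 : A * ‖x‖ ^ 2 ≤ ‖x‖ * ‖S x‖ := by
      calc A * ‖x‖ ^ 2 ≤ Complex.re ⟪x, S x⟫ := hlow x
        _ ≤ ‖(⟪x, S x⟫ : ℂ)‖ := by
            exact (le_abs_self _).trans (Complex.abs_re_le_norm _)
        _ ≤ ‖x‖ * ‖S x‖ := norm_inner_le_norm x (S x)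
    rw [inv_mul_eq_div, le_div_iff₀ hA]
    nlinarith
  have hanti' : AntilipschitzWith (⟨A⁻¹, by positivity⟩ : NNReal) S :=
    AddMonoidHomClass.antilipschitz_of_bound S (fun x => hanti x)
  have hclosed : IsClosed (Set.range S) := hanti'.isClosed_range S.uniformContinuous
  let K : Submodule ℂ H := LinearMap.range (S : H →ₗ[ℂ] H)
  have hKset : (K : Set H) = Set.range S := by
    ext u; simp [K, LinearMap.mem_range, Set.mem_range]
  haveI : CompleteSpace K := by
    rw [← hKset] at hclosed
    exact hclosed.completeSpace_coe
  have hKbot : Kᗮ = ⊥ := by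
    rw [Submodule.eq_bot_iff]
    intro x hx
    have h0 : (⟪S x, x⟫ : ℂ) = 0 :=
      (Submodule.mem_orthogonal K x).mp hx (S x) (LinearMap.mem_range_self _ x)
    have h1 : (⟪x, S x⟫ : ℂ) = 0 := by
      rw [← inner_conj_symm x (S x), h0, map_zero]
    have h2 : A * ‖x‖ ^ 2 ≤ 0 := by
      have := hlow x
      rw [h1] at this
      simpa using this
    by_contra hne
    have hp : 0 < ‖x‖ := norm_pos_iff.mpr hne
    nlinarith [mul_pos hA (mul_pos hp hp), sq ‖x‖ ▸ (sq ‖x‖).symm, sq_abs ‖x‖]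
  have hKtop : K = ⊤ := Submodule.orthogonal_eq_bot_iff.mp hKbot
  have hv : v ∈ K := hKtop ▸ Submodule.mem_top
  obtain ⟨y, hy⟩ := hv
  refine ⟨y, ?_⟩
  have hh := (hsum y).hasSum
  rw [← hSapp y, show S y = v from hy] at hh
  exact hh

end AuxBessel

section AuxIndex
variable {M : Type*} [AddCommGroup M] [TopologicalSpace M] [IsTopologicalAddGroup M]

private lemma hasSum_compl_singleton' (f : ℕ → M) (m : ℕ) (a : M) :
    HasSum (fun i : {i : ℕ // i ∉ ({m} : Set ℕ)} => f i) a ↔ HasSum f (a + f m) := by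
  let e : {i : ℕ // i ∉ ({m} : Finset ℕ)} ≃ {i : ℕ // i ∉ ({m} : Set ℕ)} :=
    Equiv.subtypeEquivRight (by intro i; simp)
  have hcomp : ((fun i : {i : ℕ // i ∉ ({m} : Set ℕ)} => f i) ∘ e)
      = fun i : {i : ℕ // i ∉ ({m} : Finset ℕ)} => f i := by
    funext i; rfl
  constructor
  · intro h
    have h2 : HasSum ((fun i : {i : ℕ // i ∉ ({m} : Set ℕ)} => f i) ∘ e) a :=
      (Equiv.hasSum_iff e).mpr h
    rw [hcomp] at h2
    simpa using (Finset.hasSum_compl_iff ({m} : Finset ℕ)).mp h2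
  · intro h
    have h3 : HasSum (fun i : {i : ℕ // i ∉ ({m} : Finset ℕ)} => f i) a :=
      (Finset.hasSum_compl_iff ({m} : Finset ℕ)).mpr (by simpa using h)
    rw [← hcomp] at h3
    exact (Equiv.hasSum_iff e).mp h3

omit [IsTopologicalAddGroup M] in
private lemma hasSum_univ_compl' (f : ℕ → M) (a : M) :
    HasSum (fun i : {i : ℕ // i ∉ (∅ : Set ℕ)} => f i) a ↔ HasSum f a := by
  let e2 : ℕ ≃ {i : ℕ // i ∉ (∅ : Set ℕ)} :=
    (Equiv.subtypeUnivEquiv (fun i => Set.notMem_empty i)).symm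
  have hcomp : ((fun i : {i : ℕ // i ∉ (∅ : Set ℕ)} => f i) ∘ e2) = f := by
    funext i; rfl
  rw [← Equiv.hasSum_iff e2, hcomp]

end AuxIndex

private lemma tsum_univ_compl' (F : ℕ → ℝ) :
    ∑' i : {i : ℕ // i ∉ (∅ : Set ℕ)}, F i = ∑' n, F n := by
  let e2 : ℕ ≃ {i : ℕ // i ∉ (∅ : Set ℕ)} :=
    (Equiv.subtypeUnivEquiv (fun i => Set.notMem_empty i)).symm
  have h := Equiv.tsum_eq e2 (fun i : {i : ℕ // i ∉ (∅ : Set ℕ)} => F i)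
  rw [← h]
  rfl

private lemma tsum_compl_singleton' {F : ℕ → ℝ} (hF : Summable F) (m : ℕ) :
    ∑' i : {i : ℕ // i ∉ ({m} : Set ℕ)}, F i = (∑' n, F n) - F m := by
  have h : HasSum (fun i : {i : ℕ // i ∉ ({m} : Set ℕ)} => F i) ((∑' n, F n) - F m) := by
    rw [hasSum_compl_singleton']
    simpa using hF.hasSum
  exact h.tsum_eq

private lemma memℓp_two_iff' (a : ℕ → ℂ) : Memℓp a 2 ↔ Summable fun n => ‖a n‖ ^ 2 := by
  rw [memℓp_gen_iff (p := 2) (by norm_num)]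
  have h2 : ∀ n, ‖a n‖ ^ (2 : ℝ≥0∞).toReal = ‖a n‖ ^ 2 := fun n => by
    rw [show ((2 : ℝ≥0∞).toReal) = ((2 : ℕ) : ℝ) by simp, Real.rpow_natCast]
  exact summable_congr fun n => by rw [h2 n]

private lemma lp_norm_sq' (a : lp (fun _ : ℕ => ℂ) 2) :
    ‖a‖ ^ 2 = ∑' n, ‖(a : ∀ _ : ℕ, ℂ) n‖ ^ 2 := by
  have h := lp.norm_rpow_eq_tsum (p := 2) (by norm_num) a
  have h2 : ∀ x : ℝ, x ^ (2 : ℝ≥0∞).toReal = x ^ 2 := fun x => by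
    rw [show ((2 : ℝ≥0∞).toReal) = ((2 : ℕ) : ℝ) by simp, Real.rpow_natCast]
  rw [← h2 ‖a‖, h]
  exact tsum_congr fun n => h2 _

variable {H : Type*} [NormedAddCommGroup H] [InnerProductSpace ℂ H] [CompleteSpace H]

/-- `f` is a Besselian frame: whenever `∑ aᵢ fᵢ` converges, `(aᵢ) ∈ ℓ²`. -/
def Besselian (f : ℕ → H) : Prop :=
  ∀ a : ℕ → ℂ, Summable (fun i : ℕ => a i • f i) → Summable (fun i : ℕ => ‖a i‖ ^ 2)

theorem besselian_one_erasure_robust_iff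
    (f : ℕ → H) (hf : IsFrame f) (hbess : Besselian f) :
    (∀ m : ℕ, IsFrameOn f ({m} : Set ℕ)) ↔
      ∃ a : ℕ → ℂ, (∀ i, a i ≠ 0) ∧ Summable (fun i : ℕ => ‖a i‖ ^ 2) ∧
        HasSum (fun i : ℕ => a i • f i) 0 := by
  obtain ⟨A, B, hA, hB, hAB⟩ := hf
  have hlowN : ∀ x : H, A * ‖x‖ ^ 2 ≤ ∑' n : ℕ, ‖⟪f n, x⟫‖ ^ 2 := fun x => by
    rw [← tsum_univ_compl']; exact (hAB x).1
  have hupN : ∀ x : H, ∑' n : ℕ, ‖⟪f n, x⟫‖ ^ 2 ≤ B * ‖x‖ ^ 2 := fun x => by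
    rw [← tsum_univ_compl']; exact (hAB x).2
  have hSN : ∀ x : H, Summable fun n : ℕ => ‖⟪f n, x⟫‖ ^ 2 :=
    summable_coeffs_of_lower' f hA hlowN
  have hsmul : ∀ {c : ℕ → ℂ}, (Summable fun n => ‖c n‖ ^ 2) → Summable fun n => c n • f n :=
    fun {c} hc => summable_smul_of_bessel' f hB.le hSN hupN hc
  constructor
  · -- forward direction
    intro hrob
    -- for each m, a null ℓ² sequence with m-th coordinate 1
    have hnull : ∀ m : ℕ, ∃ b : ℕ → ℂ,
        b m = 1 ∧ Memℓp b 2 ∧ HasSum (fun n => b n • f n) 0 := by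
      intro m
      obtain ⟨A', B', hA', hB', hq⟩ := hrob m
      obtain ⟨y, hy⟩ := frame_surjective' (fun i : {i : ℕ // i ∉ ({m} : Set ℕ)} => f i)
        hA' hB' (fun x => hq x) (f m)
      set b : ℕ → ℂ := fun n => if n = m then 1 else -⟪f n, y⟫ with hbdef
      have hb1 : HasSum (fun i : {i : ℕ // i ∉ ({m} : Set ℕ)} => b i • f i) (-(f m)) := by
        have heq : (fun i : {i : ℕ // i ∉ ({m} : Set ℕ)} => b i • f i)
            = fun i : {i : ℕ // i ∉ ({m} : Set ℕ)} => -(⟪f (i : ℕ), y⟫ • f (i : ℕ)) := by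
          funext i
          have hne : (i : ℕ) ≠ m := by simpa [Set.mem_singleton_iff] using i.2
          simp [hbdef, hne, neg_smul]
        rw [heq]
        exact hy.neg
      have hb2 : HasSum (fun n => b n • f n) 0 := by
        have h := (hasSum_compl_singleton' (fun n => b n • f n) m (-(f m))).mp hb1
        have hbm : b m • f m = f m := by simp [hbdef]
        rw [hbm] at h
        simpa using h
      have hbsq : Summable fun n => ‖b n‖ ^ 2 := hbess b hb2.summable
      exact ⟨b, by simp [hbdef], (memℓp_two_iff' b).mpr hbsq, hb2⟩
    -- the synthesis operator on ℓ²
    have hmem : ∀ a : lp (fun _ : ℕ => ℂ) 2, Summable fun n => ‖(a : ∀ _ : ℕ, ℂ) n‖ ^ 2 :=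
      fun a => (memℓp_two_iff' _).mp (lp.memℓp a)
    let T : lp (fun _ : ℕ => ℂ) 2 →ₗ[ℂ] H :=
      { toFun := fun a => ∑' n, (a : ∀ _ : ℕ, ℂ) n • f n
        map_add' := fun a b => by
          show ∑' n, (↑(a + b) : ∀ _ : ℕ, ℂ) n • f n = _
          have hc : ∀ n, (↑(a + b) : ∀ _ : ℕ, ℂ) n
              = (a : ∀ _ : ℕ, ℂ) n + (b : ∀ _ : ℕ, ℂ) n := fun n => by
            rw [lp.coeFn_add]; rfl
          have heq : (fun n => (↑(a + b) : ∀ _ : ℕ, ℂ) n • f n)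
              = fun n => (a : ∀ _ : ℕ, ℂ) n • f n + (b : ∀ _ : ℕ, ℂ) n • f n := by
            funext n; rw [hc n, add_smul]
          rw [heq, Summable.tsum_add (hsmul (hmem a)) (hsmul (hmem b))]
        map_smul' := fun c a => by
          show ∑' n, (↑(c • a) : ∀ _ : ℕ, ℂ) n • f n = c • ∑' n, (a : ∀ _ : ℕ, ℂ) n • f n
          have hc : ∀ n, (↑(c • a) : ∀ _ : ℕ, ℂ) n = c * (a : ∀ _ : ℕ, ℂ) n := fun n => by
            rw [lp.coeFn_smul]; rfl
          rw [← ((hsmul (hmem a)).hasSum.const_smul c).tsum_eq]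
          exact tsum_congr fun n => by rw [hc n, mul_smul] }
    have hTbound : ∀ a, ‖T a‖ ≤ Real.sqrt B * ‖a‖ := by
      intro a
      have h1 := norm_tsum_smul_le' f hB.le hSN hupN (hmem a)
      calc ‖T a‖ ≤ Real.sqrt B * Real.sqrt (∑' n, ‖(a : ∀ _ : ℕ, ℂ) n‖ ^ 2) := h1
        _ = Real.sqrt B * ‖a‖ := by rw [← lp_norm_sq' a, Real.sqrt_sq (norm_nonneg a)]
    let Tc : lp (fun _ : ℕ => ℂ) 2 →L[ℂ] H := LinearMap.mkContinuous T (Real.sqrt B) hTbound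
    let N : Submodule ℂ (lp (fun _ : ℕ => ℂ) 2) := LinearMap.ker (Tc : lp (fun _ : ℕ => ℂ) 2 →ₗ[ℂ] H)
    have hNmem : ∀ a : lp (fun _ : ℕ => ℂ) 2,
        a ∈ N ↔ HasSum (fun n => (a : ∀ _ : ℕ, ℂ) n • f n) 0 := by
      intro a
      constructor
      · intro h
        have hz : (∑' n, (a : ∀ _ : ℕ, ℂ) n • f n) = 0 := h
        have := (hsmul (hmem a)).hasSum
        rwa [hz] at this
      · intro h
        exact h.tsum_eq
    have hNclosed : IsClosed (N : Set (lp (fun _ : ℕ => ℂ) 2)) :=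
      ContinuousLinearMap.isClosed_ker Tc
    haveI : CompleteSpace N := hNclosed.completeSpace_coe
    -- Baire category: some element of N has all coordinates nonzero
    have hexists : ∃ a : N, ∀ i : ℕ, ((a : lp (fun _ : ℕ => ℂ) 2) : ∀ _ : ℕ, ℂ) i ≠ 0 := by
      by_contra hcon
      push_neg at hcon
      have hevalCont : ∀ i : ℕ,
          Continuous fun a : lp (fun _ : ℕ => ℂ) 2 => (a : ∀ _ : ℕ, ℂ) i := by
        intro i
        refine LipschitzWith.continuous (K := 1) ?_
        apply LipschitzWith.of_dist_le_mul
        intro a b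
        rw [dist_eq_norm, dist_eq_norm]
        have heq : (a : ∀ _ : ℕ, ℂ) i - (b : ∀ _ : ℕ, ℂ) i
            = ((a - b : lp (fun _ : ℕ => ℂ) 2) : ∀ _ : ℕ, ℂ) i := by
          rw [lp.coeFn_sub]; rfl
        rw [heq]
        simpa using lp.norm_apply_le_norm two_ne_zero (a - b) i
      set C : ℕ → Set N :=
        fun i => {a : N | ((a : lp (fun _ : ℕ => ℂ) 2) : ∀ _ : ℕ, ℂ) i = 0} with hCdef
      have hCclosed : ∀ i, IsClosed (C i) := fun i =>
        isClosed_eq ((hevalCont i).comp continuous_subtype_val) continuous_const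
      have hCunion : ⋃ i, C i = Set.univ := by
        ext a
        simp only [Set.mem_iUnion, Set.mem_univ, iff_true]
        exact hcon a
      haveI : BaireSpace N := BaireSpace.of_completelyPseudoMetrizable
      haveI : Nonempty N := ⟨0⟩
      obtain ⟨i, hi⟩ := nonempty_interior_of_iUnion_of_closed hCclosed hCunion
      let φ : N →ₗ[ℂ] ℂ :=
        { toFun := fun a => ((a : lp (fun _ : ℕ => ℂ) 2) : ∀ _ : ℕ, ℂ) i
          map_add' := fun a b => by
            show ((↑(a + b) : lp (fun _ : ℕ => ℂ) 2) : ∀ _ : ℕ, ℂ) i = _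
            rw [Submodule.coe_add, lp.coeFn_add]; rfl
          map_smul' := fun c a => by
            show ((↑(c • a) : lp (fun _ : ℕ => ℂ) 2) : ∀ _ : ℕ, ℂ) i = _
            rw [Submodule.coe_smul, lp.coeFn_smul]; rfl }
      have hMset : ((LinearMap.ker φ : Submodule ℂ N) : Set N) = C i := by
        ext a
        simp [LinearMap.mem_ker, φ, hCdef]
      have htop : LinearMap.ker φ = ⊤ :=
        Submodule.eq_top_of_nonempty_interior' _ (by rw [hMset]; exact hi)
      obtain ⟨b, hb1, hbmem, hbsum0⟩ := hnull i
      have hbN : (⟨b, hbmem⟩ : lp (fun _ : ℕ => ℂ) 2) ∈ N :=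
        (hNmem _).mpr hbsum0
      have hker : (⟨(⟨b, hbmem⟩ : lp (fun _ : ℕ => ℂ) 2), hbN⟩ : N) ∈ LinearMap.ker φ := by
        rw [htop]; exact Submodule.mem_top
      have : b i = 0 := hker
      rw [hb1] at this
      exact one_ne_zero this
    obtain ⟨a, ha⟩ := hexists
    refine ⟨fun n => ((a : lp (fun _ : ℕ => ℂ) 2) : ∀ _ : ℕ, ℂ) n, ha, hmem _, ?_⟩
    exact (hNmem _).mp a.2
  · -- backward direction
    rintro ⟨a, ha0, ha2, hsum0⟩ m
    set Ca := (∑' n, ‖a n‖ ^ 2) / ‖a m‖ ^ 2 with hCadef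
    have ham : 0 < ‖a m‖ := norm_pos_iff.mpr (ha0 m)
    have hCa0 : 0 ≤ Ca := div_nonneg (tsum_nonneg fun n => by positivity) (sq_nonneg _)
    refine ⟨A / (1 + Ca), B, div_pos hA (by linarith), hB, fun x => ?_⟩
    have hSx := hSN x
    have hsub : Summable fun i : {i : ℕ // i ∉ ({m} : Set ℕ)} => ‖⟪f (i : ℕ), x⟫‖ ^ 2 :=
      hSx.subtype _
    have hsplit : ∑' i : {i : ℕ // i ∉ ({m} : Set ℕ)}, ‖⟪f (i : ℕ), x⟫‖ ^ 2
        = (∑' n, ‖⟪f n, x⟫‖ ^ 2) - ‖⟪f m, x⟫‖ ^ 2 := tsum_compl_singleton' hSx m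
    have hsubnn : 0 ≤ ∑' i : {i : ℕ // i ∉ ({m} : Set ℕ)}, ‖⟪f (i : ℕ), x⟫‖ ^ 2 :=
      tsum_nonneg fun i => by positivity
    have hkey : ‖⟪f m, x⟫‖ ^ 2 ≤ Ca * ∑' i : {i : ℕ // i ∉ ({m} : Set ℕ)}, ‖⟪f (i : ℕ), x⟫‖ ^ 2 := by
      have h1 : HasSum (fun n => (a n * ⟪x, f n⟫ : ℂ)) 0 := by
        have := (innerSL ℂ x).hasSum hsum0
        simpa [inner_smul_right] using this
      have h2 : HasSum (fun i : {i : ℕ // i ∉ ({m} : Set ℕ)} => (a (i : ℕ) * ⟪x, f (i : ℕ)⟫ : ℂ))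
          (-(a m * ⟪x, f m⟫)) :=
        (hasSum_compl_singleton' (fun n => (a n * ⟪x, f n⟫ : ℂ)) m
          (-(a m * ⟪x, f m⟫))).mpr (by simpa using h1)
      have hu : Summable fun i : {i : ℕ // i ∉ ({m} : Set ℕ)} => ‖a (i : ℕ)‖ ^ 2 :=
        ha2.subtype _
      have hv : Summable fun i : {i : ℕ // i ∉ ({m} : Set ℕ)} => ‖(⟪x, f (i : ℕ)⟫ : ℂ)‖ ^ 2 := by
        refine hsub.congr fun i => ?_
        rw [← norm_inner_symm]
      have h4 := norm_tsum_mul_le' hu hv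
      rw [h2.tsum_eq, norm_neg, norm_mul] at h4
      have hvv : (∑' i : {i : ℕ // i ∉ ({m} : Set ℕ)}, ‖(⟪x, f (i : ℕ)⟫ : ℂ)‖ ^ 2)
          = ∑' i : {i : ℕ // i ∉ ({m} : Set ℕ)}, ‖⟪f (i : ℕ), x⟫‖ ^ 2 :=
        tsum_congr fun i => by rw [norm_inner_symm]
      rw [hvv] at h4
      have hule : (∑' i : {i : ℕ // i ∉ ({m} : Set ℕ)}, ‖a (i : ℕ)‖ ^ 2) ≤ ∑' n, ‖a n‖ ^ 2 := by
        rw [tsum_compl_singleton' ha2 m]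
        nlinarith [sq_nonneg ‖a m‖]
      -- square h4
      have hxm : ‖(⟪x, f m⟫ : ℂ)‖ = ‖⟪f m, x⟫‖ := by rw [norm_inner_symm]
      have hsq := mul_le_mul_of_nonneg_left h4 (le_of_lt ham) |>.trans_eq' rfl
      have h5 : (‖a m‖ * ‖(⟪x, f m⟫ : ℂ)‖) ^ 2
          ≤ (∑' n, ‖a n‖ ^ 2) * ∑' i : {i : ℕ // i ∉ ({m} : Set ℕ)}, ‖⟪f (i : ℕ), x⟫‖ ^ 2 := by
        have hnn : 0 ≤ ‖a m‖ * ‖(⟪x, f m⟫ : ℂ)‖ := by positivity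
        have hrs : Real.sqrt (∑' i : {i : ℕ // i ∉ ({m} : Set ℕ)}, ‖a (i : ℕ)‖ ^ 2) *
            Real.sqrt (∑' i : {i : ℕ // i ∉ ({m} : Set ℕ)}, ‖⟪f (i : ℕ), x⟫‖ ^ 2)
            ≤ Real.sqrt (∑' n, ‖a n‖ ^ 2) *
              Real.sqrt (∑' i : {i : ℕ // i ∉ ({m} : Set ℕ)}, ‖⟪f (i : ℕ), x⟫‖ ^ 2) :=
          mul_le_mul_of_nonneg_right (Real.sqrt_le_sqrt hule) (Real.sqrt_nonneg _)
        have h6 := h4.trans hrs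
        have h7 := mul_le_mul h6 h6 hnn (by positivity)
        calc (‖a m‖ * ‖(⟪x, f m⟫ : ℂ)‖) ^ 2
            = (‖a m‖ * ‖(⟪x, f m⟫ : ℂ)‖) * (‖a m‖ * ‖(⟪x, f m⟫ : ℂ)‖) := sq (‖a m‖ * ‖(⟪x, f m⟫ : ℂ)‖) ▸ rfl
          _ ≤ (Real.sqrt (∑' n, ‖a n‖ ^ 2) *
              Real.sqrt (∑' i : {i : ℕ // i ∉ ({m} : Set ℕ)}, ‖⟪f (i : ℕ), x⟫‖ ^ 2)) *
              (Real.sqrt (∑' n, ‖a n‖ ^ 2) *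
              Real.sqrt (∑' i : {i : ℕ // i ∉ ({m} : Set ℕ)}, ‖⟪f (i : ℕ), x⟫‖ ^ 2)) := h7
          _ = (∑' n, ‖a n‖ ^ 2) * ∑' i : {i : ℕ // i ∉ ({m} : Set ℕ)}, ‖⟪f (i : ℕ), x⟫‖ ^ 2 := by
              rw [show ∀ p q : ℝ, (p * q) * (p * q) = (p * p) * (q * q) from fun p q => by ring]
              rw [Real.mul_self_sqrt (tsum_nonneg fun n => by positivity), Real.mul_self_sqrt hsubnn]
      rw [mul_pow, hxm] at h5
      rw [hCadef]
      rw [div_mul_eq_mul_div, le_div_iff₀ (pow_pos ham 2)]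
      calc ‖⟪f m, x⟫‖ ^ 2 * ‖a m‖ ^ 2 = ‖a m‖ ^ 2 * ‖⟪f m, x⟫‖ ^ 2 := by ring
        _ ≤ (∑' n, ‖a n‖ ^ 2) * ∑' i : {i : ℕ // i ∉ ({m} : Set ℕ)}, ‖⟪f (i : ℕ), x⟫‖ ^ 2 := h5
    constructor
    · -- lower bound
      have hl := hlowN x
      rw [div_mul_eq_mul_div, div_le_iff₀ (by linarith : (0:ℝ) < 1 + Ca)]
      have hts : ∑' n, ‖⟪f n, x⟫‖ ^ 2
          = (∑' i : {i : ℕ // i ∉ ({m} : Set ℕ)}, ‖⟪f (i : ℕ), x⟫‖ ^ 2) + ‖⟪f m, x⟫‖ ^ 2 := by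
        rw [hsplit]; ring
      nlinarith [hkey, hsubnn]
    · -- upper bound
      rw [hsplit]
      have := hupN x
      nlinarith [sq_nonneg ‖⟪f m, x⟫‖]
end

section
/- Let K be a complex Hilbert space, P : K → K an orthogonal projection, (e i)_{i∈ℕ} an orthonormal basis of K, and f : ℕ → K a sequence with f i in the range of P for all i, which is a frame for the subspace range(P). Let S : K → K satisfy S x = ∑_{i∈ℕ} ⟨x, f i⟩ · f i for all x in range(P), and let R : K → K be a positive self-adjoint operator mapping range(P) to itself with R(R(y)) = S(y) for all y ∈ range(P) and R(P(e i)) = f i for every i. Then for every j ∈ ℕ, ‖f j‖² = ∑_{i∈ℕ} |⟨e j, f i⟩|². -/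
open scoped ComplexInnerProductSpace

/-- For a Besselian-type dilation setup: `P` an orthogonal projection of `K`, `(eᵢ)` an
orthonormal basis of `K`, `f` a frame for `range P` with frame operator `S` on `range P`,
and `R = S^{1/2}` (positive, self-adjoint, mapping `range P` to itself, `R² = S` on `range P`)
with `R (P eᵢ) = fᵢ`, one has `‖f_j‖² = ∑ᵢ |⟨e_j, fᵢ⟩|²`.  (The paper's inner product
`⟨x, y⟩`, linear in the first argument, is `⟪y, x⟫` in Mathlib's convention.) -/
theorem norm_sq_frame_vector_eq_tsum_inner_basis
    {K : Type*} [NormedAddCommGroup K] [InnerProductSpace ℂ K] [CompleteSpace K]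
    (P : K →L[ℂ] K) (hP : IsSelfAdjoint P) (hP2 : ∀ x : K, P (P x) = P x)
    (e : HilbertBasis ℕ ℂ K) (f : ℕ → K)
    (hfP : ∀ i, f i ∈ Set.range P)
    (hframe : ∃ A B : ℝ, 0 < A ∧ 0 < B ∧ ∀ y ∈ Set.range P,
      A * ‖y‖ ^ 2 ≤ ∑' i : ℕ, ‖⟪f i, y⟫‖ ^ 2 ∧ ∑' i : ℕ, ‖⟪f i, y⟫‖ ^ 2 ≤ B * ‖y‖ ^ 2)
    (S : K →L[ℂ] K) (hS : ∀ y ∈ Set.range P, S y = ∑' i : ℕ, ⟪f i, y⟫ • f i)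
    (R : K →L[ℂ] K) (hR : R.IsPositive)
    (hRrange : ∀ y ∈ Set.range P, R y ∈ Set.range P)
    (hRS : ∀ y ∈ Set.range P, R (R y) = S y)
    (hRe : ∀ i : ℕ, R (P (e i)) = f i) :
    ∀ j : ℕ, ‖f j‖ ^ 2 = ∑' i : ℕ, ‖⟪f i, e j⟫‖ ^ 2 := by
  intro j
  have hPadj : ∀ x y : K, ⟪P x, y⟫ = ⟪x, P y⟫ := fun x y => by
    conv_lhs => rw [← hP.adjoint_eq]
    rw [ContinuousLinearMap.adjoint_inner_left]
  have hRsa : IsSelfAdjoint R := hR.isSelfAdjoint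
  have hRadj : ∀ x y : K, ⟪R x, y⟫ = ⟪x, R y⟫ := fun x y => by
    conv_lhs => rw [← hRsa.adjoint_eq]
    rw [ContinuousLinearMap.adjoint_inner_left]
  have hPf : ∀ i, P (f i) = f i := fun i => by
    obtain ⟨v, hv⟩ := hfP i; rw [← hv, hP2]
  have key : ∀ i, ⟪f i, e j⟫ = ⟪(e i : K), f j⟫ := by
    intro i
    calc ⟪f i, e j⟫ = ⟪P (f i), e j⟫ := by rw [hPf]
      _ = ⟪f i, P (e j)⟫ := hPadj _ _
      _ = ⟪R (P (e i)), P (e j)⟫ := by rw [hRe]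
      _ = ⟪P (e i), R (P (e j))⟫ := hRadj _ _
      _ = ⟪P (e i), f j⟫ := by rw [hRe]
      _ = ⟪(e i : K), P (f j)⟫ := hPadj _ _
      _ = ⟪(e i : K), f j⟫ := by rw [hPf]
  have h := e.tsum_inner_mul_inner (f j) (f j)
  have h2 : ((∑' i : ℕ, ‖⟪(e i : K), f j⟫‖ ^ 2 : ℝ) : ℂ) = ((‖f j‖ ^ 2 : ℝ) : ℂ) := by
    have hn : (⟪f j, f j⟫ : ℂ) = ((‖f j‖ ^ 2 : ℝ) : ℂ) := by
      rw [inner_self_eq_norm_sq_to_K]; norm_cast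
    rw [Complex.ofReal_tsum, ← hn, ← h]
    refine tsum_congr fun i => ?_
    rw [← inner_conj_symm (f j) (e i : K), RCLike.conj_mul]
    norm_cast
  have h3 := Complex.ofReal_injective h2
  rw [← h3]
  exact (tsum_congr fun i => by rw [key i]).symm
end
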